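/- arXiv:1512.03213 — 5 statements merged into one kernel-verified Lean document; each statement's English description precedes it below -/
import Mathlib

section
/- Let q be a natural number, a an integer with gcd(a,q)=1, and P a polynomial with integer coefficients. Let ρ(q) denote the number of residues k modulo q with P(k) ≡ 0 (mod q). Then the absolute value of the sum of e(an/q) over residues n modulo q with gcd(P(n), q) = 1 is at most ρ(q). -/
open Finset

/-- `e x = exp(2πix)`. -/
noncomputable def e (x : ℝ) : ℂ := Complex.exp (2 * Real.pi * Complex.I * (x : ℂ))

lemma e_add (x y : ℝ) : e (x + y) = e x * e y := by
  simp only [e, ← Complex.exp_add]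
  push_cast
  ring_nf

lemma norm_e (x : ℝ) : ‖e x‖ = 1 := by
  have h : (2 * (Real.pi : ℂ) * Complex.I * (x : ℂ)) = ((2 * Real.pi * x : ℝ) : ℂ) * Complex.I := by
    push_cast; ring
  rw [e, h, Complex.norm_exp_ofReal_mul_I]

lemma geom_zero (m : ℕ) (hm : 1 < m) (a : ℤ) (hma : ¬ ((m : ℤ) ∣ a)) :
    ∑ t ∈ Finset.range m, e ((a : ℝ) * t / m) = 0 := by
  have hm0 : (m : ℝ) ≠ 0 := by positivity
  set x : ℂ := e ((a : ℝ) / m) with hx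
  have hxt : ∀ t : ℕ, e ((a : ℝ) * t / m) = x ^ t := by
    intro t
    rw [hx, e, e, ← Complex.exp_nat_mul]
    congr 1
    push_cast
    ring
  have hx1 : x ≠ 1 := by
    intro h
    rw [hx, e, Complex.exp_eq_one_iff] at h
    obtain ⟨n, hn⟩ := h
    have h2 : (2 * (Real.pi : ℂ) * Complex.I) ≠ 0 := by
      simp [Real.pi_ne_zero, Complex.I_ne_zero]
    have h3 : (((a : ℝ) / m : ℝ) : ℂ) = (n : ℂ) := by
      rw [mul_comm ((n : ℂ)) _] at hn
      exact mul_left_cancel₀ h2 hn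
    have hm0c : (m : ℂ) ≠ 0 := by exact_mod_cast hm0
    have h4 : (a : ℂ) = (n : ℂ) * (m : ℂ) := by
      push_cast at h3
      field_simp at h3
      rw [mul_comm]; exact_mod_cast h3
    have h5 : a = n * m := by exact_mod_cast h4
    exact hma ⟨n, by rw [h5, mul_comm]⟩
  have hxm : x ^ m = 1 := by
    rw [← hxt m]
    have : (a : ℝ) * m / m = (a : ℝ) := by field_simp
    rw [this, e]
    have : 2 * (Real.pi : ℂ) * Complex.I * (a : ℝ) = (a : ℤ) * (2 * Real.pi * Complex.I) := by
      push_cast; ring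
    rw [this, Complex.exp_int_mul_two_pi_mul_I]
  calc ∑ t ∈ Finset.range m, e ((a : ℝ) * t / m) = ∑ t ∈ Finset.range m, x ^ t := by
        exact Finset.sum_congr rfl fun t _ => hxt t
    _ = (x ^ m - 1) / (x - 1) := geom_sum_eq hx1 m
    _ = 0 := by rw [hxm]; simp

lemma sum_range_mul (d m : ℕ) (hd : 0 < d) (F : ℕ → ℂ) :
    ∑ n ∈ Finset.range (d * m), F n
      = ∑ r ∈ Finset.range d, ∑ t ∈ Finset.range m, F (r + d * t) := by
  rw [← Finset.sum_product']
  refine Finset.sum_nbij' (fun n => (n % d, n / d)) (fun p => p.1 + d * p.2) ?_ ?_ ?_ ?_ ?_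
  · intro n hn
    rw [Finset.mem_range] at hn
    rw [Finset.mem_product, Finset.mem_range, Finset.mem_range]
    exact ⟨Nat.mod_lt _ hd, Nat.div_lt_of_lt_mul hn⟩
  · intro p hp
    rw [Finset.mem_product, Finset.mem_range, Finset.mem_range] at hp
    rw [Finset.mem_range]
    show p.1 + d * p.2 < d * m
    have h1 : d * (p.2 + 1) ≤ d * m := Nat.mul_le_mul_left d hp.2
    have h2 : d * (p.2 + 1) = d * p.2 + d := Nat.mul_succ d p.2
    omega
  · intro n _
    exact Nat.mod_add_div n d
  · intro p hp
    rw [Finset.mem_product, Finset.mem_range, Finset.mem_range] at hp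
    have h1 : (p.1 + d * p.2) % d = p.1 := by
      rw [Nat.add_mul_mod_self_left, Nat.mod_eq_of_lt hp.1]
    have h2 : (p.1 + d * p.2) / d = p.2 := by
      rw [Nat.add_mul_div_left _ _ hd, Nat.div_eq_of_lt hp.1, zero_add]
    simp [h1, h2]
  · intro n _
    rw [Nat.mod_add_div n d]

lemma T_zero (P : Polynomial ℤ) (a : ℤ) (q : ℕ) (hq : 0 < q) (ha : Int.gcd a q = 1)
    (d : ℕ) (hdvd : d ∣ q) (hdq : d ≠ q) :
    ∑ n ∈ (Finset.range q).filter (fun n : ℕ => (d : ℤ) ∣ P.eval (n : ℤ)),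
      e ((a : ℝ) * n / q) = 0 := by
  obtain ⟨m, rfl⟩ := hdvd
  have hd0 : 0 < d := by
    rcases Nat.eq_zero_or_pos d with h | h
    · subst h; simp at hq
    · exact h
  have hm1 : 1 < m := by
    by_contra h
    push_neg at h
    interval_cases m
    · simp at hq
    · simp at hdq
  have hma : ¬ ((m : ℤ) ∣ a) := by
    intro h
    have hm_abs : m ∣ a.natAbs := Int.natCast_dvd.mp h
    have hmq : m ∣ d * m := dvd_mul_left m d
    have : m ∣ Int.gcd a (d * m : ℕ) := Nat.dvd_gcd hm_abs (by
      rw [Int.natAbs_natCast]; exact hmq)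
    rw [ha] at this
    have := Nat.le_of_dvd one_pos this
    omega
  have hd0' : (d : ℝ) ≠ 0 := by positivity
  have hm0' : (m : ℝ) ≠ 0 := by positivity
  rw [Finset.sum_filter, sum_range_mul d m hd0]
  apply Finset.sum_eq_zero
  intro r hr
  have hcond : ∀ t : ℕ, ((d : ℤ) ∣ P.eval ((r + d * t : ℕ) : ℤ)) ↔ (d : ℤ) ∣ P.eval (r : ℤ) := by
    intro t
    have hc : ((r + d * t : ℕ) : ℤ) = (r : ℤ) + d * t := by push_cast; ring
    rw [hc]
    have key : (d : ℤ) ∣ P.eval ((r : ℤ) + d * t) - P.eval (r : ℤ) :=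
      dvd_trans ⟨t, by ring⟩ (Polynomial.sub_dvd_eval_sub _ _ _)
    constructor
    · intro h
      have := dvd_sub h key
      simpa using this
    · intro h
      have := dvd_add key h
      simpa using this
  simp_rw [hcond]
  by_cases hc : (d : ℤ) ∣ P.eval (r : ℤ)
  · simp only [hc, if_true]
    have hsplit : ∀ t : ℕ, e ((a : ℝ) * ((r + d * t : ℕ) : ℝ) / ((d * m : ℕ) : ℝ))
        = e ((a : ℝ) * r / ((d * m : ℕ) : ℝ)) * e ((a : ℝ) * t / m) := by
      intro t
      rw [← e_add]
      congr 1
      push_cast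
      field_simp
    calc ∑ t ∈ Finset.range m, e ((a : ℝ) * ((r + d * t : ℕ) : ℝ) / ((d * m : ℕ) : ℝ))
        = ∑ t ∈ Finset.range m, e ((a : ℝ) * r / ((d * m : ℕ) : ℝ)) * e ((a : ℝ) * t / m) :=
          Finset.sum_congr rfl fun t _ => hsplit t
      _ = e ((a : ℝ) * r / ((d * m : ℕ) : ℝ)) * ∑ t ∈ Finset.range m, e ((a : ℝ) * t / m) := by
          rw [Finset.mul_sum]
      _ = 0 := by rw [geom_zero m hm1 a hma, mul_zero]
  · simp [hc]

/-- A Ramanujan-sum type bound: for `gcd(a,q)=1` and `P ∈ ℤ[X]`, the exponential sum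
over residues `n (mod q)` with `gcd(P(n),q)=1` is bounded by the number of roots of
`P` modulo `q`. -/
theorem stmt_0 (q : ℕ) (hq : 1 ≤ q) (a : ℤ) (ha : Int.gcd a q = 1) (P : Polynomial ℤ) :
    ‖∑ n ∈ (Finset.range q).filter (fun n : ℕ => Int.gcd (P.eval (n : ℤ)) (q : ℤ) = 1),
        e ((a : ℝ) * n / q)‖ ≤
      (((Finset.range q).filter (fun k : ℕ => (q : ℤ) ∣ P.eval (k : ℤ))).card : ℝ) := by
  have hq0 : q ≠ 0 := by omega
  set g : ℕ → ℕ := fun n => Int.gcd (P.eval (n : ℤ)) (q : ℤ) with hg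
  have hgd : ∀ n : ℕ, g n ∣ q := by
    intro n
    have h1 : ((g n : ℤ)) ∣ (q : ℤ) := Int.gcd_dvd_right _ _
    exact_mod_cast h1
  -- Möbius identity: indicator of coprimality
  have key : ∀ k : ℕ, (∑ d ∈ k.divisors, ArithmeticFunction.moebius d)
      = if k = 1 then 1 else 0 := by
    intro k
    rw [← ArithmeticFunction.coe_mul_zeta_apply, ArithmeticFunction.moebius_mul_coe_zeta,
      ArithmeticFunction.one_apply]
  set T : ℕ → ℂ := fun d =>
    ∑ n ∈ (Finset.range q).filter (fun n : ℕ => (d : ℤ) ∣ P.eval (n : ℤ)), e ((a : ℝ) * n / q)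
    with hT
  have main : ∑ n ∈ (Finset.range q).filter (fun n : ℕ => g n = 1), e ((a : ℝ) * n / q)
      = ∑ d ∈ q.divisors, ((ArithmeticFunction.moebius d : ℤ) : ℂ) * T d := by
    rw [Finset.sum_filter]
    have step1 : ∀ n : ℕ, (if g n = 1 then e ((a : ℝ) * n / q) else 0)
        = ∑ d ∈ q.divisors, (if d ∣ g n then ((ArithmeticFunction.moebius d : ℤ) : ℂ) else 0)
            * e ((a : ℝ) * n / q) := by
      intro n
      rw [← Finset.sum_mul]
      rw [← Finset.sum_filter, Nat.divisors_filter_dvd_of_dvd hq0 (hgd n)]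
      rw [show ((g n).divisors.sum fun d => ((ArithmeticFunction.moebius d : ℤ) : ℂ))
          = (((∑ d ∈ (g n).divisors, ArithmeticFunction.moebius d : ℤ)) : ℂ) by push_cast; rfl]
      rw [key (g n)]
      split <;> simp
    rw [Finset.sum_congr rfl fun n _ => step1 n, Finset.sum_comm]
    apply Finset.sum_congr rfl
    intro d hd
    rw [Nat.mem_divisors] at hd
    simp only [hT]
    rw [Finset.sum_filter, Finset.mul_sum]
    apply Finset.sum_congr rfl
    intro n _
    have hiff : d ∣ g n ↔ (d : ℤ) ∣ P.eval (n : ℤ) := by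
      rw [hg]
      constructor
      · intro h
        have h1 : d ∣ (P.eval (n : ℤ)).natAbs :=
          h.trans (Nat.gcd_dvd_left _ _)
        exact Int.natCast_dvd.mpr h1
      · intro h
        refine Nat.dvd_gcd (Int.natCast_dvd.mp h) ?_
        rw [Int.natAbs_natCast]
        exact hd.1
    simp only [hiff]
    split <;> simp
  have hfilter_eq : (Finset.range q).filter
      (fun n : ℕ => Int.gcd (P.eval (n : ℤ)) (q : ℤ) = 1)
      = (Finset.range q).filter (fun n : ℕ => g n = 1) := rfl
  rw [hfilter_eq, main]
  rw [Finset.sum_eq_single q (fun d hd hne => by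
    rw [Nat.mem_divisors] at hd
    simp only [hT]
    rw [T_zero P a q (by omega) ha d hd.1 hne, mul_zero])
    (fun h => absurd (Nat.mem_divisors_self q hq0) h)]
  rw [norm_mul]
  have h1 : ‖((ArithmeticFunction.moebius q : ℤ) : ℂ)‖ ≤ 1 := by
    rw [Complex.norm_intCast]
    have := ArithmeticFunction.abs_moebius_le_one (n := q)
    exact_mod_cast this
  have h2 : ‖T q‖ ≤ (((Finset.range q).filter
      (fun k : ℕ => (q : ℤ) ∣ P.eval (k : ℤ))).card : ℝ) := by
    simp only [hT]
    calc ‖∑ n ∈ (Finset.range q).filter (fun n : ℕ => (q : ℤ) ∣ P.eval (n : ℤ)),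
          e ((a : ℝ) * n / q)‖
        ≤ ∑ n ∈ (Finset.range q).filter (fun n : ℕ => (q : ℤ) ∣ P.eval (n : ℤ)),
          ‖e ((a : ℝ) * n / q)‖ := norm_sum_le _ _
      _ = ∑ n ∈ (Finset.range q).filter (fun n : ℕ => (q : ℤ) ∣ P.eval (n : ℤ)), (1 : ℝ) :=
          Finset.sum_congr rfl fun n _ => norm_e _
      _ = _ := by rw [Finset.sum_const, nsmul_eq_mul, mul_one]
  calc ‖((ArithmeticFunction.moebius q : ℤ) : ℂ)‖ * ‖T q‖ ≤ 1 * ‖T q‖ :=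
        mul_le_mul_of_nonneg_right h1 (norm_nonneg _)
    _ = ‖T q‖ := one_mul _
    _ ≤ _ := h2
end

section
/- Let M ≥ 1 be an integer and let χ: ℤ → ℂ be a function that can be written as χ(n) = Σ_{i=1}^M b_i e(α_i n) with |b_i| ≤ M and α_i ∈ ℝ/ℤ. Let W be a positive integer, let A ≥ 1, and set B = A·(3M)^M. Then for any sufficiently large N one may write χ(n) = Σ_{i=1}^M b_i e((W·a_i/q_i + β_i)n) where 0 ≤ a_i < q_i ≤ N/(log N)^{100B}, gcd(a_i, q_i) = 1, and |β_i| ≤ W(log N)^{100B}/(q_i N); moreover there exists a positive integer Q ≤ (log N)^B such that for each i, either q_i divides Q or q_i/gcd(q_i, Q²) > (log N)^A. -/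
open Finset

lemma e_add_int (x : ℝ) (k : ℤ) : e (x + k) = e x := by
  unfold e
  push_cast
  rw [mul_add, Complex.exp_add]
  have h : Complex.exp (2 * (Real.pi : ℂ) * Complex.I * (k : ℂ)) = 1 := by
    rw [show (2 * (Real.pi : ℂ) * Complex.I * (k : ℂ)) = (k : ℂ) * (2 * Real.pi * Complex.I) by
      ring]
    exact Complex.exp_int_mul_two_pi_mul_I k
  rw [h, mul_one]

lemma int_gcd_emod (a b : ℤ) : Int.gcd (a % b) b = Int.gcd a b := by
  have h1 : (Int.gcd (a % b) b : ℤ) ∣ a := by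
    conv_rhs => rw [← Int.emod_add_mul_ediv a b]
    exact dvd_add (Int.gcd_dvd_left _ _) ((Int.gcd_dvd_right _ _).mul_right _)
  have h2 : (Int.gcd a b : ℤ) ∣ a % b := by
    rw [Int.emod_def]
    exact dvd_sub (Int.gcd_dvd_left _ _) ((Int.gcd_dvd_right _ _).mul_right _)
  exact Nat.dvd_antisymm
    (Int.natCast_dvd_natCast.mp (Int.dvd_coe_gcd h1 (Int.gcd_dvd_right _ _)))
    (Int.natCast_dvd_natCast.mp (Int.dvd_coe_gcd h2 (Int.gcd_dvd_right _ _)))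

lemma gcd_sq_dvd_sq (q Q : ℕ) : Nat.gcd q (Q ^ 2) ∣ (Nat.gcd q Q) ^ 2 := by
  rcases Nat.eq_zero_or_pos (Nat.gcd q Q) with h | h
  · have hq : q = 0 := Nat.eq_zero_of_gcd_eq_zero_left h
    have hQ : Q = 0 := Nat.eq_zero_of_gcd_eq_zero_right h
    subst hq; subst hQ; simp
  · obtain ⟨g, q', Q', hgpos, rfl, rfl, hco⟩ :
        ∃ g q' Q', 0 < g ∧ q = g * q' ∧ Q = g * Q' ∧ Nat.Coprime q' Q' := by
      refine ⟨Nat.gcd q Q, q / Nat.gcd q Q, Q / Nat.gcd q Q, h, ?_, ?_,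
        Nat.coprime_div_gcd_div_gcd h⟩
      · rw [Nat.mul_div_cancel' (Nat.gcd_dvd_left q Q)]
      · rw [Nat.mul_div_cancel' (Nat.gcd_dvd_right q Q)]
    have hco2 : Nat.Coprime q' (Q' ^ 2) := hco.pow_right 2
    have hgcd : Nat.gcd (g * q') (g * Q') = g := by
      rw [Nat.gcd_mul_left, hco.gcd_eq_one, mul_one]
    rw [hgcd]
    have key : Nat.gcd (g * q') ((g * Q') ^ 2) = g * Nat.gcd q' (g * Q' ^ 2) := by
      rw [show (g * Q') ^ 2 = g * (g * Q' ^ 2) by ring, Nat.gcd_mul_left]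
    rw [key, pow_two g]
    refine Nat.mul_dvd_mul_left g ?_
    have hstep : Nat.gcd q' (g * Q' ^ 2) ∣ Nat.gcd q' g * Nat.gcd q' (Q' ^ 2) :=
      gcd_mul_dvd_mul_gcd q' g (Q' ^ 2)
    rw [hco2.gcd_eq_one, mul_one] at hstep
    exact hstep.trans (Nat.gcd_dvd_right _ _)

lemma Q_construction {M : ℕ} (q : Fin M → ℕ) (hq : ∀ i, 0 < q i) (L : ℝ) (hL : 1 ≤ L) :
    ∀ m : ℕ, ∀ Q : ℕ, 0 < Q → M ≤ (univ.filter (fun i => q i ∣ Q)).card + m →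
    ∃ Q' : ℕ, 0 < Q' ∧ (Q' : ℝ) ≤ L ^ (2 ^ m - 1) * (Q : ℝ) ^ (2 ^ m) ∧
      ∀ i, q i ∣ Q' ∨ (q i : ℝ) / (Nat.gcd (q i) (Q' ^ 2) : ℝ) > L := by
  intro m
  induction m with
  | zero =>
    intro Q hQ hcard
    have hfull : (univ.filter (fun i => q i ∣ Q)) = univ := by
      apply Finset.eq_univ_of_card
      have h1 : (univ.filter (fun i => q i ∣ Q)).card ≤ Fintype.card (Fin M) :=
        (Finset.card_filter_le _ _).trans (by simp)
      simp only [Fintype.card_fin] at h1 ⊢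
      omega
    refine ⟨Q, hQ, ?_, fun i => Or.inl ?_⟩
    · simp
    · have hi : i ∈ univ.filter (fun i => q i ∣ Q) := by
        rw [hfull]; exact Finset.mem_univ i
      exact (Finset.mem_filter.mp hi).2
  | succ m ih =>
    intro Q hQ hcard
    by_cases hall : ∀ i, q i ∣ Q ∨ (q i : ℝ) / (Nat.gcd (q i) (Q ^ 2) : ℝ) > L
    · refine ⟨Q, hQ, ?_, hall⟩
      have h1 : (1 : ℝ) ≤ L ^ (2 ^ (m + 1) - 1) := one_le_pow₀ hL
      have hQ1 : (1 : ℝ) ≤ (Q : ℝ) := by exact_mod_cast hQ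
      calc (Q : ℝ) ≤ (Q : ℝ) ^ (2 ^ (m + 1)) := le_self_pow₀ hQ1 (by positivity)
        _ ≤ L ^ (2 ^ (m + 1) - 1) * (Q : ℝ) ^ (2 ^ (m + 1)) :=
            le_mul_of_one_le_left (by positivity) h1
    · push_neg at hall
      obtain ⟨i, hi1, hi2⟩ := hall
      set Q₁ := Nat.lcm Q (q i) with hQ₁
      have hQ₁pos : 0 < Q₁ := Nat.pos_of_ne_zero (by
        rw [hQ₁]; exact Nat.lcm_ne_zero hQ.ne' (hq i).ne')
      have hdvdQ : Q ∣ Q₁ := Nat.dvd_lcm_left _ _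
      have hdvdq : q i ∣ Q₁ := Nat.dvd_lcm_right _ _
      -- card increases
      have hsub : insert i (univ.filter (fun j => q j ∣ Q)) ⊆
          univ.filter (fun j => q j ∣ Q₁) := by
        intro j hj
        rcases Finset.mem_insert.mp hj with rfl | hj
        · exact Finset.mem_filter.mpr ⟨Finset.mem_univ _, hdvdq⟩
        · exact Finset.mem_filter.mpr ⟨Finset.mem_univ _,
            (Finset.mem_filter.mp hj).2.trans hdvdQ⟩
      have hnotin : i ∉ univ.filter (fun j => q j ∣ Q) := by
        simp [hi1]
      have hcard1 : (univ.filter (fun j => q j ∣ Q)).card + 1 ≤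
          (univ.filter (fun j => q j ∣ Q₁)).card := by
        calc (univ.filter (fun j => q j ∣ Q)).card + 1
            = (insert i (univ.filter (fun j => q j ∣ Q))).card :=
              (Finset.card_insert_of_notMem hnotin).symm
          _ ≤ _ := Finset.card_le_card hsub
      obtain ⟨Q', hQ'pos, hQ'le, hQ'prop⟩ := ih Q₁ hQ₁pos (by omega)
      refine ⟨Q', hQ'pos, ?_, hQ'prop⟩
      -- bound: Q₁ ≤ L * Q^2
      have hg2pos : 0 < Nat.gcd (q i) (Q ^ 2) := Nat.gcd_pos_of_pos_left _ (hq i)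
      have hgpos : 0 < Nat.gcd (q i) Q := Nat.gcd_pos_of_pos_left _ (hq i)
      have hqle : (q i : ℝ) ≤ L * (Nat.gcd (q i) (Q ^ 2) : ℝ) := by
        rw [div_le_iff₀ (by positivity)] at hi2
        linarith [hi2]
      have hdvd2 : (Nat.gcd (q i) (Q ^ 2) : ℝ) ≤ (Nat.gcd (q i) Q : ℝ) ^ 2 := by
        have := Nat.le_of_dvd (by positivity) (gcd_sq_dvd_sq (q i) Q)
        exact_mod_cast this
      have hlcm : (Q₁ : ℝ) * (Nat.gcd (q i) Q : ℝ) = (Q : ℝ) * (q i : ℝ) := by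
        have h := Nat.gcd_mul_lcm Q (q i)
        rw [Nat.gcd_comm (q i) Q, hQ₁]
        rw [mul_comm]
        exact_mod_cast congrArg (Nat.cast : ℕ → ℝ) h
      have hQ₁le : (Q₁ : ℝ) ≤ L * (Q : ℝ) ^ 2 := by
        have hgR : (0 : ℝ) < (Nat.gcd (q i) Q : ℝ) := by exact_mod_cast hgpos
        have hgQ : (Nat.gcd (q i) Q : ℝ) ≤ (Q : ℝ) :=
          by exact_mod_cast Nat.le_of_dvd hQ (Nat.gcd_dvd_right _ _)
        have : (Q₁ : ℝ) = (Q : ℝ) * (q i : ℝ) / (Nat.gcd (q i) Q : ℝ) := by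
          field_simp at hlcm ⊢; linarith [hlcm]
        rw [this]
        rw [div_le_iff₀ hgR]
        have hQ0 : (0 : ℝ) ≤ (Q : ℝ) := Nat.cast_nonneg _
        have hL0 : (0 : ℝ) ≤ L := le_trans zero_le_one hL
        calc (Q : ℝ) * (q i) ≤ Q * (L * (Nat.gcd (q i) Q : ℝ)^2) := by
              apply mul_le_mul_of_nonneg_left _ hQ0
              calc (q i : ℝ) ≤ L * (Nat.gcd (q i) (Q^2) : ℝ) := hqle
                _ ≤ L * (Nat.gcd (q i) Q : ℝ)^2 := mul_le_mul_of_nonneg_left hdvd2 hL0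
          _ ≤ L * Q^2 * Nat.gcd (q i) Q := by
              have hprod : (0:ℝ) ≤ L * Q * (Nat.gcd (q i) Q : ℝ) * ((Q:ℝ) - Nat.gcd (q i) Q) :=
                mul_nonneg (mul_nonneg (mul_nonneg hL0 hQ0) hgR.le) (sub_nonneg.mpr hgQ)
              nlinarith [hprod]
      -- combine
      have hQpos' : (0:ℝ) < Q := by exact_mod_cast hQ
      have hLpos : (0:ℝ) < L := lt_of_lt_of_le one_pos hL
      calc (Q' : ℝ) ≤ L ^ (2 ^ m - 1) * (Q₁ : ℝ) ^ (2 ^ m) := hQ'le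
        _ ≤ L ^ (2 ^ m - 1) * (L * (Q:ℝ)^2) ^ (2 ^ m) := by
            apply mul_le_mul_of_nonneg_left _ (by positivity)
            exact pow_le_pow_left₀ (by positivity) hQ₁le _
        _ = L ^ (2 ^ (m+1) - 1) * (Q : ℝ) ^ (2 ^ (m+1)) := by
            rw [mul_pow, ← pow_mul, ← mul_assoc, ← pow_add]
            have h2 : 2 ^ (m + 1) = 2 * 2 ^ m := by rw [pow_succ]; ring
            have h3 : 1 ≤ 2 ^ m := Nat.one_le_two_pow
            congr 2
            · omega
            · omega

/-- Fourier expansion of a function of Fourier complexity at most `M` with phases put into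
the form `W a/q + β`, together with a modulus `Q ≤ (log N)^B` (`B = A(3M)^M`) such that
each `q_i` either divides `Q` or satisfies `q_i / gcd(q_i, Q²) > (log N)^A`. -/
theorem stmt_4 (M : ℕ) (hM : 1 ≤ M) (b : Fin M → ℂ) (α : Fin M → ℝ)
    (hb : ∀ i, ‖b i‖ ≤ M) (χ : ℤ → ℂ)
    (hχ : ∀ n : ℤ, χ n = ∑ i, b i * e (α i * n))
    (W : ℕ) (hW : 0 < W) (A : ℝ) (hA : 1 ≤ A) :
    ∃ N₀ : ℕ, ∀ N : ℕ, N₀ ≤ N →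
    ∃ (a q : Fin M → ℕ) (β : Fin M → ℝ) (Q : ℕ),
      (∀ i, a i < q i ∧
        (q i : ℝ) ≤ N / (Real.log N) ^ (100 * (A * (3*(M:ℝ))^M)) ∧
        Nat.gcd (a i) (q i) = 1 ∧
        |β i| ≤ W * (Real.log N) ^ (100 * (A * (3*(M:ℝ))^M)) / ((q i : ℝ) * N)) ∧
      (∀ n : ℤ, χ n = ∑ i, b i * e (((W : ℝ) * ((a i : ℝ) / (q i : ℝ)) + β i) * n)) ∧
      0 < Q ∧ (Q : ℝ) ≤ (Real.log N) ^ (A * (3*(M:ℝ))^M) ∧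
      ∀ i, q i ∣ Q ∨ ((q i : ℝ) / (Nat.gcd (q i) (Q^2) : ℝ) > (Real.log N) ^ A) := by
  set B : ℝ := A * (3*(M:ℝ))^M with hB
  set C : ℝ := 100 * B with hC
  have hM1 : (1:ℝ) ≤ (M:ℝ) := by exact_mod_cast hM
  have h3M : (1:ℝ) ≤ (3*(M:ℝ))^M := one_le_pow₀ (by linarith)
  have hB1 : 1 ≤ B := by nlinarith
  have hC1 : (1:ℝ) ≤ C := by nlinarith
  -- eventually (log x)^C ≤ x
  have hev : ∀ᶠ x : ℝ in Filter.atTop, Real.log x ^ C ≤ x := by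
    have h := (isLittleO_log_rpow_rpow_atTop C one_pos).def one_pos
    filter_upwards [h, Filter.eventually_ge_atTop (1:ℝ)] with x hx hx1
    have hlx : 0 ≤ Real.log x := Real.log_nonneg hx1
    have hx0 : (0:ℝ) ≤ x := by linarith
    rw [Real.norm_eq_abs, Real.norm_eq_abs, Real.rpow_one, one_mul,
      abs_of_nonneg (Real.rpow_nonneg hlx _), abs_of_nonneg hx0] at hx
    exact hx
  have hevN : ∀ᶠ N : ℕ in Filter.atTop,
      Real.log N ^ C ≤ (N:ℝ) ∧ 3 ≤ N := by
    refine (tendsto_natCast_atTop_atTop.eventually hev).and (Filter.eventually_ge_atTop 3)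
  obtain ⟨N₀, hN₀⟩ := Filter.eventually_atTop.mp hevN
  refine ⟨N₀, fun N hN => ?_⟩
  obtain ⟨hNpow, hN3⟩ := hN₀ N hN
  have hN0 : (0:ℝ) < (N:ℝ) := by exact_mod_cast Nat.lt_of_lt_of_le (by norm_num) hN3
  have hlog1 : 1 ≤ Real.log N := by
    rw [Real.le_log_iff_exp_le hN0]
    calc Real.exp 1 ≤ 2.7182818286 := Real.exp_one_lt_d9.le
      _ ≤ (3:ℝ) := by norm_num
      _ ≤ (N:ℝ) := by exact_mod_cast hN3
  have hlog0 : (0:ℝ) ≤ Real.log N := by linarith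
  have hpowpos : (0:ℝ) < Real.log N ^ C := Real.rpow_pos_of_pos (by linarith) C
  set T : ℝ := (N:ℝ) / Real.log N ^ C with hT
  have hT1 : (1:ℝ) ≤ T := (one_le_div hpowpos).mpr hNpow
  set X : ℕ := ⌊T⌋₊ with hX
  have hXpos : 0 < X := by
    have : (1:ℕ) ≤ X := Nat.le_floor (by exact_mod_cast hT1)
    omega
  have hWR : (0:ℝ) < (W:ℝ) := by exact_mod_cast hW
  choose r hr1 hr2 using fun i => Real.exists_rat_abs_sub_le_and_den_le (α i / W) hXpos
  set q : Fin M → ℕ := fun i => (r i).den with hq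
  set a : Fin M → ℕ := fun i => ((r i).num % ((r i).den : ℤ)).toNat with ha
  set β : Fin M → ℝ := fun i => α i - W * ((r i : ℚ) : ℝ) with hβ
  have hqpos : ∀ i, 0 < q i := fun i => (r i).pos
  have hqR : ∀ i, (0:ℝ) < (q i : ℝ) := fun i => by exact_mod_cast hqpos i
  have hdenZ : ∀ i, (0:ℤ) < ((r i).den : ℤ) := fun i => by exact_mod_cast (r i).pos
  have haZ : ∀ i, (a i : ℤ) = (r i).num % ((r i).den : ℤ) := fun i =>
    Int.toNat_of_nonneg (Int.emod_nonneg _ (hdenZ i).ne')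
  -- q i ≤ N / log^C
  have hqle : ∀ i, (q i : ℝ) ≤ T := fun i => by
    calc (q i : ℝ) ≤ (X : ℝ) := by exact_mod_cast hr2 i
      _ ≤ T := Nat.floor_le (by linarith)
  -- the Q part
  have hL1 : 1 ≤ Real.log N ^ A := by
    calc (1:ℝ) = 1 ^ A := (Real.one_rpow A).symm
      _ ≤ Real.log N ^ A := Real.rpow_le_rpow (by norm_num) hlog1 (by linarith)
  obtain ⟨Q, hQpos, hQle, hQprop⟩ :=
    Q_construction q hqpos (Real.log N ^ A) hL1 M 1 one_pos (by omega)
  refine ⟨a, q, β, Q, fun i => ⟨?_, ?_, ?_, ?_⟩, ?_, hQpos, ?_, hQprop⟩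
  · -- a i < q i
    have h := Int.emod_lt_of_pos (r i).num (hdenZ i)
    have : (a i : ℤ) < (q i : ℤ) := by rw [haZ i]; exact h
    exact_mod_cast this
  · exact hqle i
  · -- gcd
    have h1 : Int.gcd ((a i : ℤ)) ((q i : ℤ)) = 1 := by
      rw [haZ i, int_gcd_emod]
      simpa [Int.gcd] using (r i).reduced
    simpa [Int.gcd_natCast_natCast] using h1
  · -- |β i| ≤ ...
    have hβeq : β i = (W:ℝ) * (α i / W - ((r i : ℚ) : ℝ)) := by
      simp only [hβ]; field_simp
    rw [hβeq, abs_mul, abs_of_pos hWR]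
    have haux : |α i / W - ((r i : ℚ) : ℝ)| ≤ Real.log N ^ C / ((q i : ℝ) * N) := by
      refine (hr1 i).trans ?_
      rw [div_le_div_iff₀ (by positivity) (by positivity)]
      have hTX : T < (X:ℝ) + 1 := Nat.lt_floor_add_one T
      have hNlt : (N:ℝ) ≤ ((X:ℝ) + 1) * Real.log N ^ C := by
        rw [hT, div_lt_iff₀ hpowpos] at hTX
        linarith
      calc (1:ℝ) * ((q i : ℝ) * N) = (q i : ℝ) * N := by ring
        _ ≤ (q i : ℝ) * (((X:ℝ) + 1) * Real.log N ^ C) :=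
            mul_le_mul_of_nonneg_left hNlt (hqR i).le
        _ = Real.log N ^ C * (((X:ℝ) + 1) * (q i : ℝ)) := by ring
    calc (W:ℝ) * |α i / W - ((r i : ℚ) : ℝ)|
        ≤ (W:ℝ) * (Real.log N ^ C / ((q i : ℝ) * N)) :=
          mul_le_mul_of_nonneg_left haux hWR.le
      _ = (W:ℝ) * Real.log N ^ C / ((q i : ℝ) * N) := by ring
  · -- phase identity
    intro n
    rw [hχ n]
    refine Finset.sum_congr rfl fun i _ => ?_
    congr 1
    set k : ℤ := (r i).num / ((r i).den : ℤ) with hk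
    have hdne : ((r i).den : ℝ) ≠ 0 := (hqR i).ne'
    have haR : (a i : ℝ) = ((r i).num : ℝ) - ((r i).den : ℝ) * (k : ℝ) := by
      have := haZ i
      rw [Int.emod_def] at this
      exact_mod_cast congrArg (Int.cast : ℤ → ℝ) this
    have hrR : ((r i : ℚ) : ℝ) = ((r i).num : ℝ) / ((r i).den : ℝ) := by
      rw [Rat.cast_def]
    have hphase : (W : ℝ) * ((a i : ℝ) / (q i : ℝ)) + β i
        = α i * 1 + ((-(W * k) : ℤ) : ℝ) := by
      simp only [hβ, hrR, hq]
      push_cast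
      rw [haR]
      field_simp
      ring
    have : ((W : ℝ) * ((a i : ℝ) / (q i : ℝ)) + β i) * n
        = α i * n + ((-(W * k * n) : ℤ) : ℝ) := by
      have h2 : ((-(W * k * n) : ℤ) : ℝ) = ((-(W * k) : ℤ) : ℝ) * (n : ℝ) := by push_cast; ring
      rw [h2]
      calc ((W : ℝ) * ((a i : ℝ) / (q i : ℝ)) + β i) * n
          = (α i * 1 + ((-(W * k) : ℤ) : ℝ)) * n := by rw [hphase]
        _ = α i * n + ((-(W * k) : ℤ) : ℝ) * n := by ring
    rw [this, e_add_int]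
  · -- Q ≤ log^B
    refine hQle.trans ?_
    rw [Nat.cast_one, one_pow, mul_one]
    have hexp : (Real.log N ^ A) ^ (2 ^ M - 1 : ℕ)
        = Real.log N ^ (A * ((2 ^ M - 1 : ℕ) : ℝ)) := by
      rw [Real.rpow_mul hlog0, Real.rpow_natCast]
    rw [hexp]
    apply Real.rpow_le_rpow_of_exponent_le hlog1
    have hnat : (2 ^ M - 1 : ℕ) ≤ ((3 * M) ^ M : ℕ) := by
      have h2 : (2 : ℕ) ^ M ≤ (3 * M) ^ M := Nat.pow_le_pow_left (by omega) M
      omega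
    have hcast : ((2 ^ M - 1 : ℕ) : ℝ) ≤ (3*(M:ℝ))^M := by
      calc ((2 ^ M - 1 : ℕ) : ℝ) ≤ (((3 * M) ^ M : ℕ) : ℝ) := by exact_mod_cast hnat
        _ = (3*(M:ℝ))^M := by push_cast; ring
    calc A * ((2 ^ M - 1 : ℕ) : ℝ) ≤ A * (3*(M:ℝ))^M :=
          mul_le_mul_of_nonneg_left hcast (by linarith)
      _ = B := hB.symm
end

section
/- Let G = ℤ/Nℤ, Ω ⊆ G, and η ∈ (0, 1/2]. Let D = ⌈4/η⌉^{2|Ω|} and χ(n) = Π_{ξ∈Ω} S⁺_{D,η}(ξn/N) where S⁺_{D,η} is the Selberg majorant of [−η,η]. If n ∉ Bohr(Ω, 2η), then |χ(n)| ≤ (η²/8)^{|Ω|}. -/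
open Finset

/-- Distance to the nearest integer. -/
noncomputable def nint (x : ℝ) : ℝ := |x - round x|

lemma nint_le_abs_sub_int (x : ℝ) (m : ℤ) : nint x ≤ |x - m| := by
  rw [nint, abs_sub_round_eq_min]
  rcases le_or_gt (m : ℝ) (⌊x⌋ : ℝ) with h | h
  · have h1 : Int.fract x ≤ x - m := by
      rw [Int.fract]; linarith
    have h2 : x - (m:ℝ) ≤ |x - m| := le_abs_self _
    have := min_le_left (Int.fract x) (1 - Int.fract x)
    linarith
  · have hm : (⌊x⌋ : ℝ) + 1 ≤ m := by exact_mod_cast Int.lt_iff_add_one_le.mp (by exact_mod_cast h)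
    have h1 : x - m ≤ Int.fract x - 1 := by rw [Int.fract]; linarith
    have h2 : -(x - (m:ℝ)) ≤ |x - m| := neg_le_abs _
    have := min_le_right (Int.fract x) (1 - Int.fract x)
    linarith

lemma nint_neg (x : ℝ) : nint (-x) = nint x := by
  apply le_antisymm
  · calc nint (-x) ≤ |(-x) - (-(round x) : ℤ)| := nint_le_abs_sub_int _ _
      _ = nint x := by rw [nint]; push_cast; rw [← abs_neg]; ring_nf
  · calc nint x ≤ |x - (-(round (-x)) : ℤ)| := nint_le_abs_sub_int _ _
      _ = nint (-x) := by rw [nint]; push_cast; rw [← abs_neg]; ring_nf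

lemma nint_shift {x η : ℝ} (hη : 0 < η) (h : 2*η ≤ nint x) : η ≤ nint (x - η) := by
  have h1 : nint x ≤ |x - round (x - η)| := nint_le_abs_sub_int x _
  have h2 : |x - round (x - η)| - |x - η - round (x - η)| ≤ |η| :=
    (abs_sub_abs_le_abs_sub _ _).trans (le_of_eq (by ring_nf))
  rw [abs_of_pos hη] at h2
  rw [nint]
  linarith

/-- Pointwise smallness of the smooth Bohr cutoff outside `Bohr(Ω, 2η)`: with
`D = ⌈4/η⌉^{2|Ω|}` and `S` a Selberg-type majorant (taking values in `[0,2]` and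
satisfying the Selberg approximation bound away from the Bohr set), the cutoff
`χ(n) = ∏_{ξ∈Ω} S(ξn/N)` satisfies `|χ(n)| ≤ (η²/8)^{|Ω|}` for `n ∉ Bohr(Ω, 2η)`. -/
theorem stmt_6 (N : ℕ) [NeZero N] (Ω : Finset (ZMod N)) (η : ℝ) (hη : 0 < η)
    (hη2 : η ≤ 1/2) (D : ℕ) (hD : D = ⌈4/η⌉₊ ^ (2 * Ω.card))
    (S : ℝ → ℝ) (hS2 : ∀ x, 0 ≤ S x ∧ S x ≤ 2)
    (hSapprox : ∀ x : ℝ, 2*η ≤ nint x →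
      |S x| ≤ (1/((D : ℝ)+1)^2) *
        (1/(Real.sin (Real.pi * nint (x - η)))^2 + 1/(Real.sin (Real.pi * nint (-x - η)))^2))
    (n : ZMod N) (hn : ¬ (∀ ξ ∈ Ω, nint (((ξ * n).val : ℝ) / N) ≤ 2*η)) :
    |∏ ξ ∈ Ω, S (((ξ * n).val : ℝ) / N)| ≤ (η^2/8) ^ Ω.card := by
  push_neg at hn
  obtain ⟨ξ₀, hξ₀, hbad⟩ := hn
  set x₀ : ℝ := ((ξ₀ * n).val : ℝ) / N with hx₀
  have hk : 1 ≤ Ω.card := Finset.card_pos.mpr ⟨ξ₀, hξ₀⟩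
  set k := Ω.card with hkdef
  -- sin lower bounds
  have sinb : ∀ y : ℝ, η ≤ nint y → 1/(Real.sin (Real.pi * nint y))^2 ≤ 1/(4*η^2) := by
    intro y hy
    have ht2 : nint y ≤ 1/2 := abs_sub_round y
    have hny : (0:ℝ) ≤ nint y := abs_nonneg _
    have hs : 2 * nint y ≤ Real.sin (Real.pi * nint y) := by
      have h := Real.mul_le_sin (x := Real.pi * nint y)
        (by positivity) (by nlinarith [Real.pi_pos])
      have heq : 2 / Real.pi * (Real.pi * nint y) = 2 * nint y := by
        field_simp
      linarith [heq ▸ h]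
    have h2η : 2 * η ≤ Real.sin (Real.pi * nint y) := by linarith
    have : 4 * η^2 ≤ (Real.sin (Real.pi * nint y))^2 := by nlinarith
    exact one_div_le_one_div_of_le (by positivity) this
  -- bound on the bad factor
  have hb1 : η ≤ nint (x₀ - η) := nint_shift hη hbad.le
  have hb2 : η ≤ nint (-x₀ - η) := by
    have h2 : 2*η ≤ nint (-x₀) := by rw [nint_neg]; exact hbad.le
    exact nint_shift hη h2
  have hDge : (4/η)^(2*k) ≤ (D : ℝ) + 1 := by
    have h1 : 4/η ≤ (⌈4/η⌉₊ : ℝ) := Nat.le_ceil _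
    have h2 : (4/η)^(2*k) ≤ ((⌈4/η⌉₊ : ℝ))^(2*k) :=
      pow_le_pow_left₀ (by positivity) h1 _
    have h3 : ((⌈4/η⌉₊ ^ (2*k) : ℕ) : ℝ) = ((⌈4/η⌉₊ : ℝ))^(2*k) := by push_cast; ring
    rw [hD]; rw [h3] at *; linarith
  have hDpos : (0:ℝ) < (4/η)^(2*k) := by positivity
  have hbadbound : |S x₀| ≤ (η/4)^(4*k) / (2*η^2) := by
    have h1 := hSapprox x₀ hbad.le
    have h2 : 1/(Real.sin (Real.pi * nint (x₀ - η)))^2 ≤ 1/(4*η^2) := sinb _ hb1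
    have h3 : 1/(Real.sin (Real.pi * nint (-x₀ - η)))^2 ≤ 1/(4*η^2) := sinb _ hb2
    have h4 : (1/((D : ℝ)+1)^2) ≤ (η/4)^(4*k) := by
      have hsq : ((4/η)^(2*k))^2 ≤ ((D:ℝ)+1)^2 := pow_le_pow_left₀ hDpos.le hDge 2
      have heq : ((4/η)^(2*k))^2 = (4/η)^(4*k) := by
        rw [← pow_mul]; ring_nf
      have hpos : (0:ℝ) < (4/η)^(4*k) := by positivity
      have h5 : 1/((D:ℝ)+1)^2 ≤ 1/(4/η)^(4*k) := by
        rw [← heq]; exact one_div_le_one_div_of_le (by positivity) hsq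
      have h6 : 1/(4/η)^(4*k) = (η/4)^(4*k) := by
        rw [one_div, ← inv_pow, inv_div]
      linarith
    have hD1pos : (0:ℝ) < 1/((D:ℝ)+1)^2 := by positivity
    calc |S x₀| ≤ (1/((D : ℝ)+1)^2) * (1/(4*η^2) + 1/(4*η^2)) := by
          refine h1.trans (mul_le_mul_of_nonneg_left (by linarith) hD1pos.le)
      _ = (1/((D : ℝ)+1)^2) * (1/(2*η^2)) := by ring_nf
      _ ≤ (η/4)^(4*k) * (1/(2*η^2)) := by
          apply mul_le_mul_of_nonneg_right h4 (by positivity)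
      _ = (η/4)^(4*k) / (2*η^2) := by ring
  -- split product
  rw [Finset.abs_prod, ← Finset.mul_prod_erase Ω _ hξ₀]
  have hrest : ∏ ξ ∈ Ω.erase ξ₀, |S (((ξ * n).val : ℝ) / N)| ≤ 2 ^ (k - 1) := by
    rw [← Finset.card_erase_of_mem hξ₀]
    calc ∏ ξ ∈ Ω.erase ξ₀, |S (((ξ * n).val : ℝ) / N)|
        ≤ ∏ _ξ ∈ Ω.erase ξ₀, (2:ℝ) := by
          apply Finset.prod_le_prod (fun a _ => abs_nonneg _)
          intro a _
          rw [abs_of_nonneg (hS2 _).1]; exact (hS2 _).2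
      _ = 2 ^ #(Ω.erase ξ₀) := Finset.prod_const _
  have hrest0 : (0:ℝ) ≤ ∏ ξ ∈ Ω.erase ξ₀, |S (((ξ * n).val : ℝ) / N)| :=
    Finset.prod_nonneg (fun a _ => abs_nonneg _)
  calc |S x₀| * ∏ ξ ∈ Ω.erase ξ₀, |S (((ξ * n).val : ℝ) / N)|
      ≤ ((η/4)^(4*k) / (2*η^2)) * 2 ^ (k-1) := by
        apply mul_le_mul hbadbound hrest hrest0 (by positivity)
    _ ≤ (η^2/8) ^ k := by
        have h2k : (2:ℝ) ^ (k-1) = (2:ℝ)^k / 2 := by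
          rw [eq_div_iff (by norm_num : (2:ℝ) ≠ 0), ← pow_succ]
          congr 1; omega
        have hsplit : (η/4)^(4*k) = (η^2/8)^k * (η^2/16)^k / 2^k := by
          rw [pow_mul, ← mul_pow, ← div_pow]
          congr 1; ring
        have h2kne : ((2:ℝ)^k) ≠ 0 := by positivity
        have he : ((η/4)^(4*k) / (2*η^2)) * ((2:ℝ) ^ (k-1)) =
            (η^2/8)^k * ((η^2/16)^k / (4*η^2)) := by
          rw [h2k, hsplit]
          field_simp
          ring
        rw [he]
        have hle1 : (η^2/16)^k ≤ η^2/16 := by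
          have h01 : (0:ℝ) ≤ η^2/16 := by positivity
          have h11 : η^2/16 ≤ 1 := by nlinarith
          have := pow_le_pow_of_le_one h01 h11 hk
          simpa using this
        have hfac : (η^2/16)^k / (4*η^2) ≤ 1 := by
          rw [div_le_one (by positivity)]
          nlinarith
        exact mul_le_of_le_one_right (by positivity) hfac
end

section
/- For a finite set Q of positive integers, define a sequence Q₀ = 1 and Q_{i+1} = Π_{q ∈ Q : q/gcd(q, Q_i²) ≤ T} q for a parameter T ≥ 1. Then there exists I ≤ |Q| such that Q_{I+1} = Q_I, and setting Q = Q_I: for every q ∈ Q, either q divides Q or q/gcd(q, Q²) > T; moreover Q_i ≤ T^{3^i M^i} for all i where M = |Q| (assuming each q ∈ Q is at most T, whence Q ≤ T^{(3M)^M}). -/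
open Finset

/-- Stabilization construction for the modulus `Q`: starting from `Q₀ = 1` and
`Q_{i+1} = ∏_{q ∈ 𝒬, q/gcd(q,Q_i²) ≤ T} q`, the sequence stabilizes within `|𝒬|`
steps at a value `Q = Q_I` such that every `q ∈ 𝒬` either divides `Q` or satisfies
`q/gcd(q,Q²) > T`; moreover `Q_i ≤ T^{3^i |𝒬|^i}` and (if every `q ∈ 𝒬` is at most `T`)
`Q ≤ T^{(3|𝒬|)^{|𝒬|}}`. -/
theorem stmt_14 (𝒬 : Finset ℕ) (hQpos : ∀ q ∈ 𝒬, 0 < q) (T : ℝ) (hT : 1 ≤ T)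
    (f : ℕ → ℕ) (hf0 : f 0 = 1)
    (hfs : ∀ i, f (i+1) =
      ∏ q ∈ 𝒬.filter (fun q : ℕ => (q : ℝ)/(Nat.gcd q ((f i)^2) : ℝ) ≤ T), q) :
    ∃ I ≤ 𝒬.card, f (I+1) = f I ∧
      (∀ q ∈ 𝒬, q ∣ f I ∨ (q : ℝ)/(Nat.gcd q ((f I)^2) : ℝ) > T) ∧
      (∀ i, (f i : ℝ) ≤ T ^ (3^i * 𝒬.card^i)) ∧
      ((∀ q ∈ 𝒬, (q : ℝ) ≤ T) → (f I : ℝ) ≤ T ^ ((3 * 𝒬.card)^𝒬.card)) := by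
  classical
  set S : ℕ → Finset ℕ :=
    fun i => 𝒬.filter (fun q : ℕ => (q : ℝ)/(Nat.gcd q ((f i)^2) : ℝ) ≤ T) with hS
  have hfS : ∀ i, f (i+1) = ∏ q ∈ S i, q := hfs
  have hfpos : ∀ i, 0 < f i := by
    intro i
    cases i with
    | zero => simp [hf0]
    | succ n =>
      rw [hfS n]
      exact Finset.prod_pos (fun q hq => hQpos q (Finset.mem_filter.mp hq).1)
  have hsub : ∀ i j, f i ∣ f j → S i ⊆ S j := by
    intro i j hij q hq
    rcases Finset.mem_filter.mp hq with ⟨hq𝒬, hle⟩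
    refine Finset.mem_filter.mpr ⟨hq𝒬, ?_⟩
    have hgd : Nat.gcd q ((f i)^2) ∣ Nat.gcd q ((f j)^2) :=
      Nat.gcd_dvd_gcd_of_dvd_right _ (pow_dvd_pow_of_dvd hij 2)
    have h1 : 0 < Nat.gcd q ((f i)^2) := Nat.gcd_pos_of_pos_left _ (hQpos q hq𝒬)
    have h2 : (Nat.gcd q ((f i)^2) : ℝ) ≤ (Nat.gcd q ((f j)^2) : ℝ) := by
      exact_mod_cast Nat.le_of_dvd (Nat.gcd_pos_of_pos_left _ (hQpos q hq𝒬)) hgd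
    calc (q:ℝ)/(Nat.gcd q ((f j)^2):ℝ) ≤ (q:ℝ)/(Nat.gcd q ((f i)^2):ℝ) := by
          gcongr
      _ ≤ T := hle
  have hdvd : ∀ i, f i ∣ f (i+1) := by
    intro i
    induction i with
    | zero => simp [hf0]
    | succ n ih =>
      rw [hfS n, hfS (n+1)]
      exact Finset.prod_dvd_prod_of_subset _ _ _ (hsub n (n+1) ih)
  -- pigeonhole: stabilization
  have key : ∃ I ≤ 𝒬.card, f (I+1) = f I := by
    by_contra hcon
    push_neg at hcon
    have hS0 : S 0 ≠ ∅ := by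
      intro h
      apply hcon 0 (Nat.zero_le _)
      rw [hfS 0, h, hf0]
      simp
    have hchain : ∀ i, i ≤ 𝒬.card → i + 1 ≤ (S i).card := by
      intro i
      induction i with
      | zero =>
        intro _
        exact Nat.one_le_iff_ne_zero.mpr (fun h => hS0 (Finset.card_eq_zero.mp h))
      | succ n ih =>
        intro hn
        have h1 := ih (Nat.le_of_succ_le hn)
        have hss : S n ⊂ S (n+1) := by
          refine ⟨hsub n (n+1) (hdvd n), ?_⟩
          intro hback
          have heq : S n = S (n+1) :=
            Finset.Subset.antisymm (hsub n (n+1) (hdvd n)) hback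
          apply hcon (n+1) hn
          rw [hfS (n+1), hfS n, heq]
        have := Finset.card_lt_card hss
        omega
    have h2 := hchain 𝒬.card le_rfl
    have h3 : (S 𝒬.card).card ≤ 𝒬.card := Finset.card_le_card (Finset.filter_subset _ _)
    omega
  obtain ⟨I, hI, hfix⟩ := key
  -- the bound
  have hbound : ∀ i, (f i : ℝ) ≤ T ^ (3^i * 𝒬.card^i) := by
    intro i
    induction i with
    | zero => rw [hf0]; simpa using hT
    | succ i ih =>
      rcases Nat.eq_zero_or_pos 𝒬.card with h0 | hpos
      · have hQe : 𝒬 = ∅ := Finset.card_eq_zero.mp h0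
        rw [hfS i]
        simp [hS, hQe, h0]
      · set e : ℕ := 3^i * 𝒬.card^i with he
        have he1 : 1 ≤ e := Nat.one_le_iff_ne_zero.mpr (by positivity)
        have hfige : (1:ℝ) ≤ (f i : ℝ) := by exact_mod_cast hfpos i
        have hq_le : ∀ q ∈ S i, (q:ℝ) ≤ T * ((f i : ℝ))^2 := by
          intro q hq
          rcases Finset.mem_filter.mp hq with ⟨hq𝒬, hle⟩
          have hg : 0 < Nat.gcd q ((f i)^2) := Nat.gcd_pos_of_pos_left _ (hQpos q hq𝒬)
          have hgle : (Nat.gcd q ((f i)^2) : ℝ) ≤ ((f i : ℝ))^2 := by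
            have := Nat.le_of_dvd (pow_pos (hfpos i) 2) (Nat.gcd_dvd_right q ((f i)^2))
            exact_mod_cast this
          have hgpos : (0:ℝ) < (Nat.gcd q ((f i)^2) : ℝ) := by exact_mod_cast hg
          have := (div_le_iff₀ hgpos).mp hle
          calc (q:ℝ) ≤ T * (Nat.gcd q ((f i)^2) : ℝ) := this
            _ ≤ T * ((f i : ℝ))^2 := by
                apply mul_le_mul_of_nonneg_left hgle (by linarith)
        have h1T : (1:ℝ) ≤ T * ((f i : ℝ))^2 := by nlinarith
        have hexp : (2*e+1) * 𝒬.card ≤ 3^(i+1) * 𝒬.card^(i+1) := by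
          have : 3^(i+1) * 𝒬.card^(i+1) = (3*e) * 𝒬.card := by
            rw [he]; ring
          rw [this]
          exact Nat.mul_le_mul_right _ (by omega)
        calc (f (i+1) : ℝ) = ∏ q ∈ S i, (q:ℝ) := by rw [hfS i]; push_cast; rfl
          _ ≤ ∏ _q ∈ S i, (T * ((f i : ℝ))^2) :=
              Finset.prod_le_prod (fun q _ => by positivity) hq_le
          _ = (T * ((f i : ℝ))^2) ^ (S i).card := by rw [Finset.prod_const]
          _ ≤ (T * ((f i : ℝ))^2) ^ 𝒬.card := by
              apply pow_le_pow_right₀ h1T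
              exact Finset.card_le_card (Finset.filter_subset _ _)
          _ ≤ (T * (T^e)^2) ^ 𝒬.card := by
              gcongr
          _ = T ^ ((2*e+1) * 𝒬.card) := by
              rw [← pow_mul, ← pow_succ', ← pow_mul, mul_comm e 2]
          _ ≤ T ^ (3^(i+1) * 𝒬.card^(i+1)) := pow_le_pow_right₀ hT hexp
  refine ⟨I, hI, hfix, ?_, hbound, ?_⟩
  · intro q hq
    by_cases h : (q : ℝ)/(Nat.gcd q ((f I)^2) : ℝ) ≤ T
    · left
      have hmem : q ∈ S I := Finset.mem_filter.mpr ⟨hq, h⟩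
      have : q ∣ f (I+1) := by rw [hfS I]; exact Finset.dvd_prod_of_mem _ hmem
      rwa [hfix] at this
    · right; exact lt_of_not_ge h
  · intro _
    refine (hbound I).trans (pow_le_pow_right₀ hT ?_)
    rcases Nat.eq_zero_or_pos 𝒬.card with h0 | hpos
    · have : I = 0 := by omega
      subst this
      simp [h0]
    · calc 3^I * 𝒬.card^I = (3 * 𝒬.card)^I := (mul_pow 3 𝒬.card I).symm
        _ ≤ (3 * 𝒬.card)^𝒬.card := Nat.pow_le_pow_right (by omega) hI
end

section
/- Let F, f: [1, ∞) → ℝ_{≥0} be the continuous solutions of the linear sieve delay-differential system: sF(s) = 2e^γ for 1 ≤ s ≤ 3, sf(s) = 0 for 1 ≤ s ≤ 2, (sF(s))' = f(s−1) for s > 3, and (sf(s))' = F(s−1) for s > 2, where γ is the Euler–Mascheroni constant. Then f(5) − (1/2)∫_{1/10}^{1/3} F(5 − 10t) dt/t − (3/10)·F(3)·∫_{1/10}^{1/3}∫_{1/3}^{(1−α₁)/2} dα₂dα₁/(α₁α₂(1−α₁−α₂)) > 0. -/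
open intervalIntegral

lemma chen_aux (u : ℝ) (hu : 0 ≤ u) (p : ℝ → ℝ) (q : ℝ → ℝ) (n : ℕ)
    (hd : ∀ x : ℝ, 0 ≤ x → HasDerivAt p (q x) x)
    (hq : ∀ x : ℝ, 0 ≤ x → q x = x ^ n / (1 + x))
    (hp0 : p 0 = 0) : 0 ≤ p u := by
  have key : ∀ x ∈ Set.uIcc (0:ℝ) u, HasDerivAt p (q x) x := by
    intro x hx
    rw [Set.uIcc_of_le hu] at hx
    exact hd x hx.1
  have hint : IntervalIntegrable q MeasureTheory.volume 0 u := by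
    apply ContinuousOn.intervalIntegrable
    have : ∀ x ∈ Set.uIcc (0:ℝ) u, q x = x ^ n / (1 + x) := by
      intro x hx; rw [Set.uIcc_of_le hu] at hx; exact hq x hx.1
    apply ContinuousOn.congr (f := fun x => x ^ n / (1 + x)) ?_ this
    apply ContinuousOn.div (by fun_prop) (by fun_prop)
    intro x hx
    rw [Set.uIcc_of_le hu] at hx
    have := hx.1; positivity
  have heq := intervalIntegral.integral_eq_sub_of_hasDerivAt key hint
  have hpos : 0 ≤ ∫ x in (0:ℝ)..u, q x := by
    apply intervalIntegral.integral_nonneg hu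
    intro x hx
    rw [hq x hx.1]
    have := hx.1
    positivity
  rw [heq, hp0] at hpos
  linarith

lemma chen_hlog (x : ℝ) (h1x : (0:ℝ) < 1 + x) :
    HasDerivAt (fun x : ℝ => Real.log (1+x)) (1/(1+x)) x := by
  have hs : HasDerivAt (fun x : ℝ => 1 + x) 1 x := by
    simpa using (hasDerivAt_id x).const_add (1:ℝ)
  have := (Real.hasDerivAt_log (ne_of_gt h1x)).comp x hs
  simpa [one_div, Function.comp_def] using this

lemma chen_log_le3 (u : ℝ) (hu : 0 ≤ u) : Real.log (1+u) ≤ u - u^2/2 + u^3/3 := by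
  have h := chen_aux u hu (fun x => x - x^2/2 + x^3/3 - Real.log (1+x))
      (fun x => (1 - x + x^2) - 1/(1+x)) 3 ?_ ?_ (by norm_num)
  · linarith [h]
  · intro x hx
    have h1x : (0:ℝ) < 1 + x := by linarith
    have h2 : HasDerivAt (fun x:ℝ => x^2) (2*x) x := by simpa using hasDerivAt_pow 2 x
    have h3 : HasDerivAt (fun x:ℝ => x^3) (3*x^2) x := by simpa using hasDerivAt_pow 3 x
    have hp := ((hasDerivAt_id x).sub (h2.div_const 2)).add (h3.div_const 3)
    refine (hp.sub (chen_hlog x h1x)).congr_deriv ?_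
    ring
  · intro x hx
    have h1x : (0:ℝ) < 1 + x := by linarith
    field_simp
    ring

lemma chen_log_le5 (u : ℝ) (hu : 0 ≤ u) :
    Real.log (1+u) ≤ u - u^2/2 + u^3/3 - u^4/4 + u^5/5 := by
  have h := chen_aux u hu
      (fun x => x - x^2/2 + x^3/3 - x^4/4 + x^5/5 - Real.log (1+x))
      (fun x => (1 - x + x^2 - x^3 + x^4) - 1/(1+x)) 5 ?_ ?_ (by norm_num)
  · linarith [h]
  · intro x hx
    have h1x : (0:ℝ) < 1 + x := by linarith
    have h2 : HasDerivAt (fun x:ℝ => x^2) (2*x) x := by simpa using hasDerivAt_pow 2 x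
    have h3 : HasDerivAt (fun x:ℝ => x^3) (3*x^2) x := by simpa using hasDerivAt_pow 3 x
    have h4 : HasDerivAt (fun x:ℝ => x^4) (4*x^3) x := by simpa using hasDerivAt_pow 4 x
    have h5 : HasDerivAt (fun x:ℝ => x^5) (5*x^4) x := by simpa using hasDerivAt_pow 5 x
    have hp := ((((hasDerivAt_id x).sub (h2.div_const 2)).add (h3.div_const 3)).sub
      (h4.div_const 4)).add (h5.div_const 5)
    refine (hp.sub (chen_hlog x h1x)).congr_deriv ?_
    ring
  · intro x hx
    have h1x : (0:ℝ) < 1 + x := by linarith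
    field_simp
    ring

lemma chen_log_le7 (u : ℝ) (hu : 0 ≤ u) :
    Real.log (1+u) ≤ u - u^2/2 + u^3/3 - u^4/4 + u^5/5 - u^6/6 + u^7/7 := by
  have h := chen_aux u hu
      (fun x => x - x^2/2 + x^3/3 - x^4/4 + x^5/5 - x^6/6 + x^7/7 - Real.log (1+x))
      (fun x => (1 - x + x^2 - x^3 + x^4 - x^5 + x^6) - 1/(1+x)) 7 ?_ ?_ (by norm_num)
  · linarith [h]
  · intro x hx
    have h1x : (0:ℝ) < 1 + x := by linarith
    have h2 : HasDerivAt (fun x:ℝ => x^2) (2*x) x := by simpa using hasDerivAt_pow 2 x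
    have h3 : HasDerivAt (fun x:ℝ => x^3) (3*x^2) x := by simpa using hasDerivAt_pow 3 x
    have h4 : HasDerivAt (fun x:ℝ => x^4) (4*x^3) x := by simpa using hasDerivAt_pow 4 x
    have h5 : HasDerivAt (fun x:ℝ => x^5) (5*x^4) x := by simpa using hasDerivAt_pow 5 x
    have h6 : HasDerivAt (fun x:ℝ => x^6) (6*x^5) x := by simpa using hasDerivAt_pow 6 x
    have h7 : HasDerivAt (fun x:ℝ => x^7) (7*x^6) x := by simpa using hasDerivAt_pow 7 x
    have hp := ((((((hasDerivAt_id x).sub (h2.div_const 2)).add (h3.div_const 3)).sub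
      (h4.div_const 4)).add (h5.div_const 5)).sub (h6.div_const 6)).add (h7.div_const 7)
    refine (hp.sub (chen_hlog x h1x)).congr_deriv ?_
    ring
  · intro x hx
    have h1x : (0:ℝ) < 1 + x := by linarith
    field_simp
    ring

lemma chen_log_ge2 (u : ℝ) (hu : 0 ≤ u) : u - u^2/2 ≤ Real.log (1+u) := by
  have h := chen_aux u hu
      (fun x => Real.log (1+x) - (x - x^2/2))
      (fun x => 1/(1+x) - (1 - x)) 2 ?_ ?_ (by norm_num)
  · linarith [h]
  · intro x hx
    have h1x : (0:ℝ) < 1 + x := by linarith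
    have h2 : HasDerivAt (fun x:ℝ => x^2) (2*x) x := by simpa using hasDerivAt_pow 2 x
    have hp := (hasDerivAt_id x).sub (h2.div_const 2)
    refine ((chen_hlog x h1x).sub hp).congr_deriv ?_
    ring
  · intro x hx
    have h1x : (0:ℝ) < 1 + x := by linarith
    field_simp
    ring

lemma chen_log_ge4 (u : ℝ) (hu : 0 ≤ u) :
    u - u^2/2 + u^3/3 - u^4/4 ≤ Real.log (1+u) := by
  have h := chen_aux u hu
      (fun x => Real.log (1+x) - (x - x^2/2 + x^3/3 - x^4/4))
      (fun x => 1/(1+x) - (1 - x + x^2 - x^3)) 4 ?_ ?_ (by norm_num)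
  · linarith [h]
  · intro x hx
    have h1x : (0:ℝ) < 1 + x := by linarith
    have h2 : HasDerivAt (fun x:ℝ => x^2) (2*x) x := by simpa using hasDerivAt_pow 2 x
    have h3 : HasDerivAt (fun x:ℝ => x^3) (3*x^2) x := by simpa using hasDerivAt_pow 3 x
    have h4 : HasDerivAt (fun x:ℝ => x^4) (4*x^3) x := by simpa using hasDerivAt_pow 4 x
    have hp := (((hasDerivAt_id x).sub (h2.div_const 2)).add (h3.div_const 3)).sub
      (h4.div_const 4)
    refine ((chen_hlog x h1x).sub hp).congr_deriv ?_
    ring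
  · intro x hx
    have h1x : (0:ℝ) < 1 + x := by linarith
    field_simp
    ring

lemma chen_l3_lo : (1.0986095:ℝ) < Real.log 3 := by
  have h98 : Real.log (1+(1/8:ℝ)) = 2*Real.log 3 - 3*Real.log 2 := by
    rw [show (1:ℝ)+1/8 = 3^2/2^3 by norm_num,
      Real.log_div (by norm_num) (by norm_num), Real.log_pow, Real.log_pow]
    push_cast; ring
  have h := chen_log_ge4 (1/8) (by norm_num)
  rw [h98] at h
  norm_num at h
  linarith [Real.log_two_gt_d9]

lemma chen_l3_hi : Real.log 3 < (1.0986126:ℝ) := by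
  have h98 : Real.log (1+(1/8:ℝ)) = 2*Real.log 3 - 3*Real.log 2 := by
    rw [show (1:ℝ)+1/8 = 3^2/2^3 by norm_num,
      Real.log_div (by norm_num) (by norm_num), Real.log_pow, Real.log_pow]
    push_cast; ring
  have h := chen_log_le5 (1/8) (by norm_num)
  rw [h98] at h
  norm_num at h
  linarith [Real.log_two_lt_d9]

lemma chen_l5_lo : (1.6092761:ℝ) < Real.log 5 := by
  have h54 : Real.log (1+(1/4:ℝ)) = Real.log 5 - 2*Real.log 2 := by
    rw [show (1:ℝ)+1/4 = 5/2^2 by norm_num,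
      Real.log_div (by norm_num) (by norm_num), Real.log_pow]
    push_cast; ring
  have h := chen_log_ge4 (1/4) (by norm_num)
  rw [h54] at h
  norm_num at h
  linarith [Real.log_two_gt_d9]

lemma chen_l5_hi : Real.log 5 < (1.6094715:ℝ) := by
  have h54 : Real.log (1+(1/4:ℝ)) = Real.log 5 - 2*Real.log 2 := by
    rw [show (1:ℝ)+1/4 = 5/2^2 by norm_num,
      Real.log_div (by norm_num) (by norm_num), Real.log_pow]
    push_cast; ring
  have h := chen_log_le5 (1/4) (by norm_num)
  rw [h54] at h
  norm_num at h
  linarith [Real.log_two_lt_d9]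

open Finset intervalIntegral

set_option maxHeartbeats 4000000 in
/-- The final numerical inequality in Chen's theorem: if `F, f` are the continuous
solutions of the linear-sieve delay-differential system, then
`f(5) - (1/2)∫_{1/10}^{1/3} F(5-10t) dt/t
  - (3/10) F(3) ∫_{1/10}^{1/3}∫_{1/3}^{(1-α₁)/2} dα₂dα₁/(α₁α₂(1-α₁-α₂)) > 0`. -/
theorem stmt_17 (F f : ℝ → ℝ)
    (hFc : ContinuousOn F (Set.Ici 1)) (hfc : ContinuousOn f (Set.Ici 1))
    (hF0 : ∀ s, 1 ≤ s → 0 ≤ F s) (hf0 : ∀ s, 1 ≤ s → 0 ≤ f s)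
    (hF13 : ∀ s, 1 ≤ s → s ≤ 3 →
      s * F s = 2 * Real.exp Real.eulerMascheroniConstant)
    (hf12 : ∀ s, 1 ≤ s → s ≤ 2 → s * f s = 0)
    (hF' : ∀ s, 3 < s → HasDerivAt (fun u => u * F u) (f (s - 1)) s)
    (hf' : ∀ s, 2 < s → HasDerivAt (fun u => u * f u) (F (s - 1)) s) :
    0 < f 5 - (1/2) * (∫ t in (1/10 : ℝ)..(1/3 : ℝ), F (5 - 10*t) / t)
        - (3/10) * F 3 * (∫ a1 in (1/10 : ℝ)..(1/3 : ℝ),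
            ∫ a2 in (1/3 : ℝ)..((1 - a1)/2), 1/(a1 * a2 * (1 - a1 - a2))) := by
  set c : ℝ := 2 * Real.exp Real.eulerMascheroniConstant with hc_def
  have hc : (0:ℝ) < c := by positivity
  -- value of F on [1,3]
  have hF13' : ∀ s : ℝ, 1 ≤ s → s ≤ 3 → F s = c / s := by
    intro s h1 h3
    have hs : (0:ℝ) < s := by linarith
    rw [eq_div_iff (ne_of_gt hs)]
    linear_combination hF13 s h1 h3
  -- integral representation of v * f v for v ≥ 2
  have hfInt : ∀ v : ℝ, 2 ≤ v → v * f v = ∫ t in (2:ℝ)..v, F (t-1) := by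
    intro v h2
    have hsub : Set.Icc (2:ℝ) v ⊆ Set.Ici 1 := by
      intro x hx; exact le_trans (by norm_num) hx.1
    have hcont : ContinuousOn (fun u : ℝ => u * f u) (Set.Icc 2 v) :=
      (continuous_id.continuousOn).mul (hfc.mono hsub)
    have hint : IntervalIntegrable (fun t : ℝ => F (t-1)) MeasureTheory.volume 2 v := by
      apply ContinuousOn.intervalIntegrable
      have h1 : ContinuousOn (F ∘ (fun t : ℝ => t - 1)) (Set.uIcc 2 v) := by
        apply hFc.comp ((continuous_id.sub continuous_const).continuousOn)
        intro x hx
        rw [Set.uIcc_of_le h2] at hx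
        simp only [Set.mem_Ici, id_eq, Pi.sub_apply]
        linarith [hx.1]
      simpa [Function.comp_def] using h1
    have key := intervalIntegral.integral_eq_sub_of_hasDeriv_right_of_le h2 hcont
      (fun x hx => (hf' x hx.1).hasDerivWithinAt) hint
    have h20 : 2 * f 2 = 0 := hf12 2 (by norm_num) le_rfl
    rw [key, h20]; ring
  -- formula for f on [2,4]
  have hf24 : ∀ v : ℝ, 2 ≤ v → v ≤ 4 → v * f v = c * Real.log (v - 1) := by
    intro v h2 h4
    rw [hfInt v h2]
    have hcongr : ∫ t in (2:ℝ)..v, F (t-1) = ∫ t in (2:ℝ)..v, c / (t-1) := by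
      apply intervalIntegral.integral_congr
      intro t ht
      rw [Set.uIcc_of_le h2] at ht
      exact hF13' (t-1) (by linarith [ht.1]) (by linarith [ht.2])
    rw [hcongr]
    have hftc : ∫ t in (2:ℝ)..v, c / (t-1)
        = c * Real.log (v-1) - c * Real.log (2-1) := by
      apply intervalIntegral.integral_eq_sub_of_hasDerivAt
        (f := fun t => c * Real.log (t-1))
      · intro t ht
        rw [Set.uIcc_of_le h2] at ht
        have ht1 : (0:ℝ) < t - 1 := by linarith [ht.1]
        have hsub : HasDerivAt (fun t : ℝ => t - 1) 1 t := (hasDerivAt_id t).sub_const 1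
        have hl := ((Real.hasDerivAt_log (ne_of_gt ht1)).comp t hsub).const_mul c
        refine hl.congr_deriv ?_
        field_simp
      · apply ContinuousOn.intervalIntegrable
        apply ContinuousOn.div continuousOn_const (by fun_prop)
        intro t ht
        rw [Set.uIcc_of_le h2] at ht
        have : (0:ℝ) < t - 1 := by linarith [ht.1]
        exact ne_of_gt this
    rw [hftc]
    norm_num
  -- integral representation of s * F s for s ≥ 3
  have hFInt : ∀ s : ℝ, 3 ≤ s → s * F s = c + ∫ u in (3:ℝ)..s, f (u-1) := by
    intro s h3
    have hsub : Set.Icc (3:ℝ) s ⊆ Set.Ici 1 := by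
      intro x hx; exact le_trans (by norm_num) hx.1
    have hcont : ContinuousOn (fun u : ℝ => u * F u) (Set.Icc 3 s) :=
      (continuous_id.continuousOn).mul (hFc.mono hsub)
    have hint : IntervalIntegrable (fun u : ℝ => f (u-1)) MeasureTheory.volume 3 s := by
      apply ContinuousOn.intervalIntegrable
      have h1 : ContinuousOn (f ∘ (fun t : ℝ => t - 1)) (Set.uIcc 3 s) := by
        apply hfc.comp ((continuous_id.sub continuous_const).continuousOn)
        intro x hx
        rw [Set.uIcc_of_le h3] at hx
        simp only [Set.mem_Ici, id_eq, Pi.sub_apply]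
        linarith [hx.1]
      simpa [Function.comp_def] using h1
    have key := intervalIntegral.integral_eq_sub_of_hasDeriv_right_of_le h3 hcont
      (fun x hx => (hF' x hx.1).hasDerivWithinAt) hint
    have h30 : 3 * F 3 = c := hF13 3 (by norm_num) le_rfl
    rw [key, h30]; ring
  -- formula for F on [3,4]
  have hF35 : ∀ s : ℝ, 3 ≤ s → s ≤ 4 →
      s * F s = c + c * ∫ u in (3:ℝ)..s, Real.log (u-2) / (u-1) := by
    intro s h3 h4
    rw [hFInt s h3]
    have hcongr : ∫ u in (3:ℝ)..s, f (u-1)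
        = ∫ u in (3:ℝ)..s, c * (Real.log (u-2) / (u-1)) := by
      apply intervalIntegral.integral_congr
      intro u hu
      rw [Set.uIcc_of_le h3] at hu
      have h2u : (2:ℝ) ≤ u - 1 := by linarith [hu.1]
      have h4u : u - 1 ≤ 4 := by linarith [hu.2]
      have := hf24 (u-1) h2u h4u
      have hu1 : (0:ℝ) < u - 1 := by linarith
      field_simp
      rw [show u - 1 - 1 = u - 2 by ring] at this
      linear_combination this
    rw [hcongr, intervalIntegral.integral_const_mul]

  -- upper bound on the dilog-type integral A(s), 3 ≤ s ≤ 4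
  have hAup : ∀ s : ℝ, 3 ≤ s → s ≤ 4 →
      (∫ u in (3:ℝ)..s, Real.log (u-2) / (u-1))
        ≤ (s-3)^2/4 - (s-3)^3/6 + 5*(s-3)^4/48 := by
    intro s h3 h4
    have hlogint : IntervalIntegrable (fun u : ℝ => Real.log (u-2) / (u-1))
        MeasureTheory.volume 3 s := by
      apply ContinuousOn.intervalIntegrable
      apply ContinuousOn.div
      · apply ContinuousOn.log (by fun_prop)
        intro u hu
        rw [Set.uIcc_of_le h3] at hu
        have : (1:ℝ) ≤ u - 2 := by linarith [hu.1]
        positivity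
      · fun_prop
      · intro u hu
        rw [Set.uIcc_of_le h3] at hu
        have : (0:ℝ) < u - 1 := by linarith [hu.1]
        exact ne_of_gt this
    have hmono : (∫ u in (3:ℝ)..s, Real.log (u-2) / (u-1))
        ≤ ∫ u in (3:ℝ)..s, ((u-3) - (u-3)^2/2 + (u-3)^3/3) / (u-1) := by
      apply intervalIntegral.integral_mono_on h3 hlogint
      · apply ContinuousOn.intervalIntegrable
        apply ContinuousOn.div (by fun_prop) (by fun_prop)
        intro u hu
        rw [Set.uIcc_of_le h3] at hu
        have : (0:ℝ) < u - 1 := by linarith [hu.1]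
        exact ne_of_gt this
      · intro u hu
        have hu1 : (0:ℝ) < u - 1 := by linarith [hu.1]
        rw [div_le_div_iff_of_pos_right hu1, show u - 2 = 1 + (u-3) by ring]
        exact chen_log_le3 (u-3) (by linarith [hu.1])
    have hftc : ∫ u in (3:ℝ)..s, ((u-3) - (u-3)^2/2 + (u-3)^3/3) / (u-1)
        = ((10/3)*(s-3) - (7/12)*(s-3)^2 + (1/9)*(s-3)^3 - (20/3)*Real.log (s-1))
          - ((10/3)*((3:ℝ)-3) - (7/12)*((3:ℝ)-3)^2 + (1/9)*((3:ℝ)-3)^3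
              - (20/3)*Real.log ((3:ℝ)-1)) := by
      apply intervalIntegral.integral_eq_sub_of_hasDerivAt
      · intro u hu
        rw [Set.uIcc_of_le h3] at hu
        have hu1 : (0:ℝ) < u - 1 := by linarith [hu.1]
        have hw : HasDerivAt (fun u : ℝ => u - 3) 1 u := (hasDerivAt_id u).sub_const 3
        have hlog : HasDerivAt (fun u : ℝ => Real.log (u-1)) (u-1)⁻¹ u := by
          have hsub : HasDerivAt (fun u : ℝ => u - 1) 1 u := (hasDerivAt_id u).sub_const 1
          simpa [Function.comp_def] using (Real.hasDerivAt_log (ne_of_gt hu1)).comp u hsub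
        have hp := (((hw.const_mul ((10:ℝ)/3)).sub ((hw.pow 2).const_mul ((7:ℝ)/12))).add
          ((hw.pow 3).const_mul ((1:ℝ)/9))).sub (hlog.const_mul ((20:ℝ)/3))
        refine hp.congr_deriv ?_
        field_simp
        ring
      · apply ContinuousOn.intervalIntegrable
        apply ContinuousOn.div (by fun_prop) (by fun_prop)
        intro u hu
        rw [Set.uIcc_of_le h3] at hu
        have : (0:ℝ) < u - 1 := by linarith [hu.1]
        exact ne_of_gt this
    have hlog2 : ((s-3)/2) - ((s-3)/2)^2/2 + ((s-3)/2)^3/3 - ((s-3)/2)^4/4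
        ≤ Real.log (s-1) - Real.log 2 := by
      have he : Real.log (s-1) - Real.log 2 = Real.log (1 + (s-3)/2) := by
        rw [show (1:ℝ) + (s-3)/2 = (s-1)/2 by ring,
          Real.log_div (by linarith) (by norm_num)]
      rw [he]
      exact chen_log_ge4 _ (by linarith)
    rw [hftc] at hmono
    norm_num at hmono
    nlinarith [hlog2, hmono]
  -- lower bound on A(s)
  have hAlow : ∀ s : ℝ, 3 ≤ s → s ≤ 4 →
      (s-3)^2/4 - (s-3)^3/6 ≤ ∫ u in (3:ℝ)..s, Real.log (u-2) / (u-1) := by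
    intro s h3 h4
    have hlogint : IntervalIntegrable (fun u : ℝ => Real.log (u-2) / (u-1))
        MeasureTheory.volume 3 s := by
      apply ContinuousOn.intervalIntegrable
      apply ContinuousOn.div
      · apply ContinuousOn.log (by fun_prop)
        intro u hu
        rw [Set.uIcc_of_le h3] at hu
        have : (1:ℝ) ≤ u - 2 := by linarith [hu.1]
        positivity
      · fun_prop
      · intro u hu
        rw [Set.uIcc_of_le h3] at hu
        have : (0:ℝ) < u - 1 := by linarith [hu.1]
        exact ne_of_gt this
    have hmono : (∫ u in (3:ℝ)..s, ((u-3) - (u-3)^2/2) / (u-1))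
        ≤ ∫ u in (3:ℝ)..s, Real.log (u-2) / (u-1) := by
      apply intervalIntegral.integral_mono_on h3 ?_ hlogint
      · intro u hu
        have hu1 : (0:ℝ) < u - 1 := by linarith [hu.1]
        rw [div_le_div_iff_of_pos_right hu1, show u - 2 = 1 + (u-3) by ring]
        exact chen_log_ge2 (u-3) (by linarith [hu.1])
      · apply ContinuousOn.intervalIntegrable
        apply ContinuousOn.div (by fun_prop) (by fun_prop)
        intro u hu
        rw [Set.uIcc_of_le h3] at hu
        have : (0:ℝ) < u - 1 := by linarith [hu.1]
        exact ne_of_gt this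
    have hftc : ∫ u in (3:ℝ)..s, ((u-3) - (u-3)^2/2) / (u-1)
        = (2*(s-3) - (s-3)^2/4 - 4*Real.log (s-1))
          - (2*((3:ℝ)-3) - ((3:ℝ)-3)^2/4 - 4*Real.log ((3:ℝ)-1)) := by
      apply intervalIntegral.integral_eq_sub_of_hasDerivAt
      · intro u hu
        rw [Set.uIcc_of_le h3] at hu
        have hu1 : (0:ℝ) < u - 1 := by linarith [hu.1]
        have hw : HasDerivAt (fun u : ℝ => u - 3) 1 u := (hasDerivAt_id u).sub_const 3
        have hlog : HasDerivAt (fun u : ℝ => Real.log (u-1)) (u-1)⁻¹ u := by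
          have hsub : HasDerivAt (fun u : ℝ => u - 1) 1 u := (hasDerivAt_id u).sub_const 1
          simpa [Function.comp_def] using (Real.hasDerivAt_log (ne_of_gt hu1)).comp u hsub
        have hp := ((hw.const_mul (2:ℝ)).sub ((hw.pow 2).div_const 4)).sub
          (hlog.const_mul (4:ℝ))
        refine hp.congr_deriv ?_
        field_simp
        ring
      · apply ContinuousOn.intervalIntegrable
        apply ContinuousOn.div (by fun_prop) (by fun_prop)
        intro u hu
        rw [Set.uIcc_of_le h3] at hu
        have : (0:ℝ) < u - 1 := by linarith [hu.1]
        exact ne_of_gt this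
    have hlog2 : Real.log (s-1) - Real.log 2
        ≤ ((s-3)/2) - ((s-3)/2)^2/2 + ((s-3)/2)^3/3 := by
      have he : Real.log (s-1) - Real.log 2 = Real.log (1 + (s-3)/2) := by
        rw [show (1:ℝ) + (s-3)/2 = (s-1)/2 by ring,
          Real.log_div (by linarith) (by norm_num)]
      rw [he]
      exact chen_log_le3 _ (by linarith)
    rw [hftc] at hmono
    norm_num at hmono
    nlinarith [hlog2, hmono]
  have hl4 : Real.log (4:ℝ) = 2*Real.log 2 := by
    rw [show (4:ℝ) = 2^2 by norm_num, Real.log_pow]; push_cast; ring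
  -- lower bound for ∫_3^4 F
  have hJ : c * (2989/10000) ≤ ∫ u in (3:ℝ)..(4:ℝ), F u := by
    have hFint34 : IntervalIntegrable F MeasureTheory.volume 3 4 := by
      apply ContinuousOn.intervalIntegrable
      apply hFc.mono
      rw [Set.uIcc_of_le (by norm_num)]
      intro x hx; exact le_trans (by norm_num) hx.1
    have hmono : (∫ u in (3:ℝ)..(4:ℝ), c*(1 + ((u-3)^2/4 - (u-3)^3/6))/u)
        ≤ ∫ u in (3:ℝ)..(4:ℝ), F u := by
      apply intervalIntegral.integral_mono_on (by norm_num) ?_ hFint34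
      · intro u hu
        have hu0 : (0:ℝ) < u := by linarith [hu.1]
        have e := hF35 u hu.1 hu.2
        have a := hAlow u hu.1 hu.2
        have hFu : F u = (c + c * ∫ v in (3:ℝ)..u, Real.log (v-2) / (v-1)) / u := by
          rw [eq_div_iff (ne_of_gt hu0)]; linear_combination e
        rw [hFu, div_le_div_iff_of_pos_right hu0]
        nlinarith [mul_le_mul_of_nonneg_left a hc.le]
      · apply ContinuousOn.intervalIntegrable
        apply ContinuousOn.div (by fun_prop) (by fun_prop)
        intro u hu
        rw [Set.uIcc_of_le (by norm_num)] at hu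
        have : (0:ℝ) < u := by linarith [hu.1]
        exact ne_of_gt this
    have hftc : (∫ u in (3:ℝ)..(4:ℝ), c*(1 + ((u-3)^2/4 - (u-3)^3/6))/u)
        = c*((-(9:ℝ)/4)*((4:ℝ)-3) + (3/8)*((4:ℝ)-3)^2 - (1/18)*((4:ℝ)-3)^3
            + (31/4)*Real.log 4)
          - c*((-(9:ℝ)/4)*((3:ℝ)-3) + (3/8)*((3:ℝ)-3)^2 - (1/18)*((3:ℝ)-3)^3
            + (31/4)*Real.log 3) := by
      apply intervalIntegral.integral_eq_sub_of_hasDerivAt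
        (f := fun u => c*((-(9:ℝ)/4)*(u-3) + (3/8)*(u-3)^2 - (1/18)*(u-3)^3
          + (31/4)*Real.log u))
      · intro u hu
        rw [Set.uIcc_of_le (by norm_num)] at hu
        have hu0 : (0:ℝ) < u := by linarith [hu.1]
        have hw : HasDerivAt (fun u : ℝ => u - 3) 1 u := (hasDerivAt_id u).sub_const 3
        have hlog : HasDerivAt (fun u : ℝ => Real.log u) u⁻¹ u :=
          Real.hasDerivAt_log (ne_of_gt hu0)
        have hp := ((((hw.const_mul (-(9:ℝ)/4)).add ((hw.pow 2).const_mul ((3:ℝ)/8))).sub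
          ((hw.pow 3).const_mul ((1:ℝ)/18))).add (hlog.const_mul ((31:ℝ)/4))).const_mul c
        refine hp.congr_deriv ?_
        field_simp
        ring
      · apply ContinuousOn.intervalIntegrable
        apply ContinuousOn.div (by fun_prop) (by fun_prop)
        intro u hu
        rw [Set.uIcc_of_le (by norm_num)] at hu
        have : (0:ℝ) < u := by linarith [hu.1]
        exact ne_of_gt this
    rw [hftc] at hmono
    norm_num [hl4] at hmono
    have hnum : (2989/10000:ℝ) ≤ -139/72 + (31/4)*(2*Real.log 2 - Real.log 3) := by
      have := Real.log_two_gt_d9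
      have := chen_l3_hi
      norm_num
      linarith
    calc c * (2989/10000) ≤ c * (-139/72 + (31/4)*(2*Real.log 2 - Real.log 3)) :=
          mul_le_mul_of_nonneg_left hnum hc.le
      _ ≤ ∫ u in (3:ℝ)..(4:ℝ), F u := by nlinarith [hmono]
  -- f 5 via the integral representation
  have h5f : 5 * f 5 = c * Real.log 3 + ∫ u in (3:ℝ)..(4:ℝ), F u := by
    have h25 := hfInt 5 (by norm_num)
    have hint1 : IntervalIntegrable (fun t : ℝ => F (t-1)) MeasureTheory.volume 2 4 := by
      apply ContinuousOn.intervalIntegrable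
      have h1 : ContinuousOn (F ∘ (fun t : ℝ => t - 1)) (Set.uIcc 2 4) := by
        apply hFc.comp ((continuous_id.sub continuous_const).continuousOn)
        intro x hx
        rw [Set.uIcc_of_le (by norm_num)] at hx
        simp only [Set.mem_Ici, id_eq, Pi.sub_apply]
        linarith [hx.1]
      simpa [Function.comp_def] using h1
    have hint2 : IntervalIntegrable (fun t : ℝ => F (t-1)) MeasureTheory.volume 4 5 := by
      apply ContinuousOn.intervalIntegrable
      have h1 : ContinuousOn (F ∘ (fun t : ℝ => t - 1)) (Set.uIcc 4 5) := by
        apply hFc.comp ((continuous_id.sub continuous_const).continuousOn)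
        intro x hx
        rw [Set.uIcc_of_le (by norm_num)] at hx
        simp only [Set.mem_Ici, id_eq, Pi.sub_apply]
        linarith [hx.1]
      simpa [Function.comp_def] using h1
    have hsplit : (∫ t in (2:ℝ)..5, F (t-1))
        = (∫ t in (2:ℝ)..4, F (t-1)) + ∫ t in (4:ℝ)..5, F (t-1) :=
      (intervalIntegral.integral_add_adjacent_intervals hint1 hint2).symm
    have h24v : (∫ t in (2:ℝ)..4, F (t-1)) = c * Real.log 3 := by
      have ha := hfInt 4 (by norm_num)
      have hb := hf24 4 (by norm_num) le_rfl
      rw [ha] at hb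
      rw [hb]; norm_num
    have h45v : (∫ t in (4:ℝ)..5, F (t-1)) = ∫ u in (3:ℝ)..(4:ℝ), F u := by
      have h := intervalIntegral.integral_comp_sub_right (a := (4:ℝ)) (b := (5:ℝ)) F 1
      convert h using 2 <;> norm_num
    rw [h25, hsplit, h24v, h45v]
  -- exact value of the [1/5,1/3] piece of the first integral
  have hP2 : (∫ t in (1/5:ℝ)..(1/3:ℝ), F (5 - 10*t) / t) = c/5 * Real.log 3 := by
    have hcongr : (∫ t in (1/5:ℝ)..(1/3:ℝ), F (5 - 10*t) / t)
        = ∫ t in (1/5:ℝ)..(1/3:ℝ), c / ((5-10*t)*t) := by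
      apply intervalIntegral.integral_congr
      intro t ht
      rw [Set.uIcc_of_le (by norm_num)] at ht
      have h1 : (1:ℝ) ≤ 5 - 10*t := by linarith [ht.2]
      have h3 : (5:ℝ) - 10*t ≤ 3 := by linarith [ht.1]
      simp only []
      rw [hF13' (5-10*t) h1 h3, div_div]
    have hftc : (∫ t in (1/5:ℝ)..(1/3:ℝ), c / ((5-10*t)*t))
        = c/5*(Real.log (1/3:ℝ) - Real.log (5-10*(1/3:ℝ)))
          - c/5*(Real.log (1/5:ℝ) - Real.log (5-10*(1/5:ℝ))) := by
      apply intervalIntegral.integral_eq_sub_of_hasDerivAt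
        (f := fun t => c/5*(Real.log t - Real.log (5-10*t)))
      · intro t ht
        rw [Set.uIcc_of_le (by norm_num)] at ht
        have ht0 : (0:ℝ) < t := by linarith [ht.1]
        have hs0 : (0:ℝ) < 5 - 10*t := by linarith [ht.2]
        have hlog1 : HasDerivAt (fun t : ℝ => Real.log t) t⁻¹ t :=
          Real.hasDerivAt_log (ne_of_gt ht0)
        have hinner : HasDerivAt (fun t : ℝ => 5 - 10*t) (-10) t := by
          simpa using ((hasDerivAt_id t).const_mul (10:ℝ)).const_sub (5:ℝ)
        have hlog2 : HasDerivAt (fun t : ℝ => Real.log (5-10*t)) ((5-10*t)⁻¹ * (-10)) t :=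
          (Real.hasDerivAt_log (ne_of_gt hs0)).comp (h₂ := Real.log) t hinner
        have hp := (hlog1.sub hlog2).const_mul (c/5)
        refine hp.congr_deriv ?_
        have h5 : (5:ℝ) - t*10 ≠ 0 := by intro h; linarith
        field_simp
        ring
      · apply ContinuousOn.intervalIntegrable
        apply ContinuousOn.div continuousOn_const (by fun_prop)
        intro t ht
        rw [Set.uIcc_of_le (by norm_num)] at ht
        have ht0 : (0:ℝ) < t := by linarith [ht.1]
        have hs0 : (0:ℝ) < 5 - 10*t := by linarith [ht.2]
        positivity
    rw [hcongr, hftc]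
    have e1 : Real.log ((1:ℝ)/3) = -Real.log 3 := by rw [one_div, Real.log_inv]
    have e2 : Real.log ((1:ℝ)/5) = -Real.log 5 := by rw [one_div, Real.log_inv]
    have e3 : Real.log ((5:ℝ)/3) = Real.log 5 - Real.log 3 :=
      Real.log_div (by norm_num) (by norm_num)
    rw [show (5:ℝ)-10*(1/3:ℝ) = 5/3 by norm_num, show (5:ℝ)-10*(1/5:ℝ) = 3 by norm_num,
      e1, e2, e3]
    ring
  -- upper bound for the [1/10,1/5] piece
  have hP1 : (∫ t in (1/10:ℝ)..(1/5:ℝ), F (5 - 10*t) / t) ≤ c * (2098/10000) := by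
    have hmono : (∫ t in (1/10:ℝ)..(1/5:ℝ), F (5 - 10*t) / t)
        ≤ ∫ t in (1/10:ℝ)..(1/5:ℝ),
            c*(1 + ((2-10*t)^2/4 - (2-10*t)^3/6 + 5*(2-10*t)^4/48))/((5-10*t)*t) := by
      apply intervalIntegral.integral_mono_on (by norm_num)
      · apply ContinuousOn.intervalIntegrable
        apply ContinuousOn.div
        · have h1 : ContinuousOn (F ∘ (fun t : ℝ => 5 - 10*t))
              (Set.uIcc (1/10:ℝ) (1/5:ℝ)) := by
            apply hFc.comp (by fun_prop)
            intro x hx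
            rw [Set.uIcc_of_le (by norm_num)] at hx
            simp only [Set.mem_Ici]
            linarith [hx.2]
          simpa [Function.comp_def] using h1
        · fun_prop
        · intro t ht
          rw [Set.uIcc_of_le (by norm_num)] at ht
          have : (0:ℝ) < t := by linarith [ht.1]
          exact ne_of_gt this
      · apply ContinuousOn.intervalIntegrable
        apply ContinuousOn.div (by fun_prop) (by fun_prop)
        intro t ht
        rw [Set.uIcc_of_le (by norm_num)] at ht
        have ht0 : (0:ℝ) < t := by linarith [ht.1]
        have hs0 : (0:ℝ) < 5 - 10*t := by linarith [ht.2]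
        positivity
      · intro t ht
        have ht0 : (0:ℝ) < t := by linarith [ht.1]
        have h3s : (3:ℝ) ≤ 5 - 10*t := by linarith [ht.2]
        have h4s : (5:ℝ) - 10*t ≤ 4 := by linarith [ht.1]
        have hs0 : (0:ℝ) < 5 - 10*t := by linarith
        have e := hF35 (5-10*t) h3s h4s
        have a := hAup (5-10*t) h3s h4s
        rw [show (5-10*t) - 3 = 2-10*t by ring] at a
        have hFv : F (5-10*t)
            = (c + c * ∫ u in (3:ℝ)..(5-10*t), Real.log (u-2) / (u-1)) / (5-10*t) := by
          rw [eq_div_iff (ne_of_gt hs0)]; linear_combination e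
        rw [hFv, div_div, div_le_div_iff_of_pos_right (by positivity : (0:ℝ) < (5-10*t)*t)]
        nlinarith [mul_le_mul_of_nonneg_left a hc.le]
    have hftc : (∫ t in (1/10:ℝ)..(1/5:ℝ),
          c*(1 + ((2-10*t)^2/4 - (2-10*t)^3/6 + 5*(2-10*t)^4/48))/((5-10*t)*t))
        = c*((-245/24)*(1/5:ℝ) + (175/24)*(1/5:ℝ)^2 - (625/18)*(1/5:ℝ)^3
            + (7/15)*Real.log (1/5:ℝ) - (259/80)*Real.log (5-10*(1/5:ℝ)))
          - c*((-245/24)*(1/10:ℝ) + (175/24)*(1/10:ℝ)^2 - (625/18)*(1/10:ℝ)^3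
            + (7/15)*Real.log (1/10:ℝ) - (259/80)*Real.log (5-10*(1/10:ℝ))) := by
      apply intervalIntegral.integral_eq_sub_of_hasDerivAt
        (f := fun t => c*((-245/24)*t + (175/24)*t^2 - (625/18)*t^3
          + (7/15)*Real.log t - (259/80)*Real.log (5-10*t)))
      · intro t ht
        rw [Set.uIcc_of_le (by norm_num)] at ht
        have ht0 : (0:ℝ) < t := by linarith [ht.1]
        have hs0 : (0:ℝ) < 5 - 10*t := by linarith [ht.2]
        have hid : HasDerivAt (fun t : ℝ => t) 1 t := hasDerivAt_id t
        have hlog1 : HasDerivAt (fun t : ℝ => Real.log t) t⁻¹ t :=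
          Real.hasDerivAt_log (ne_of_gt ht0)
        have hinner : HasDerivAt (fun t : ℝ => 5 - 10*t) (-10) t := by
          simpa using ((hasDerivAt_id t).const_mul (10:ℝ)).const_sub (5:ℝ)
        have hlog2 : HasDerivAt (fun t : ℝ => Real.log (5-10*t)) ((5-10*t)⁻¹ * (-10)) t :=
          (Real.hasDerivAt_log (ne_of_gt hs0)).comp (h₂ := Real.log) t hinner
        have hp := (((((hid.const_mul (-(245:ℝ)/24)).add
          ((hid.pow 2).const_mul ((175:ℝ)/24))).sub
          ((hid.pow 3).const_mul ((625:ℝ)/18))).add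
          (hlog1.const_mul ((7:ℝ)/15))).sub
          (hlog2.const_mul ((259:ℝ)/80))).const_mul c
        refine hp.congr_deriv ?_
        have h1 : t ≠ 0 := ne_of_gt ht0
        have h2 : (5:ℝ)-10*t ≠ 0 := ne_of_gt hs0
        have h3 : ((5:ℝ)-10*t)*t ≠ 0 := mul_ne_zero h2 h1
        have h5 : (5:ℝ) - t*10 ≠ 0 := by intro h; linarith
        field_simp
        ring
      · apply ContinuousOn.intervalIntegrable
        apply ContinuousOn.div (by fun_prop) (by fun_prop)
        intro t ht
        rw [Set.uIcc_of_le (by norm_num)] at ht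
        have ht0 : (0:ℝ) < t := by linarith [ht.1]
        have hs0 : (0:ℝ) < 5 - 10*t := by linarith [ht.2]
        positivity
    rw [hftc] at hmono
    have e2 : Real.log ((1:ℝ)/5) = -Real.log 5 := by rw [one_div, Real.log_inv]
    have e4 : Real.log ((1:ℝ)/10) = -(Real.log 2 + Real.log 5) := by
      rw [one_div, Real.log_inv, show (10:ℝ) = 2*5 by norm_num,
        Real.log_mul (by norm_num) (by norm_num)]
    rw [show (5:ℝ)-10*(1/5:ℝ) = 3 by norm_num, show (5:ℝ)-10*(1/10:ℝ) = 4 by norm_num,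
      e2, e4, hl4] at hmono
    have hnum : c*((-245/24)*(1/5:ℝ) + (175/24)*(1/5:ℝ)^2 - (625/18)*(1/5:ℝ)^3
            + (7/15)*(-Real.log 5) - (259/80)*Real.log 3)
          - c*((-245/24)*(1/10:ℝ) + (175/24)*(1/10:ℝ)^2 - (625/18)*(1/10:ℝ)^3
            + (7/15)*(-(Real.log 2 + Real.log 5)) - (259/80)*(2*Real.log 2))
          ≤ c * (2098/10000) := by
      apply le_trans (le_of_eq (by ring :
        c*((-245/24)*(1/5:ℝ) + (175/24)*(1/5:ℝ)^2 - (625/18)*(1/5:ℝ)^3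
            + (7/15)*(-Real.log 5) - (259/80)*Real.log 3)
          - c*((-245/24)*(1/10:ℝ) + (175/24)*(1/10:ℝ)^2 - (625/18)*(1/10:ℝ)^3
            + (7/15)*(-(Real.log 2 + Real.log 5)) - (259/80)*(2*Real.log 2))
        = c * (-(301:ℝ)/288 + (7/15)*Real.log 2 + (259/80)*(2*Real.log 2 - Real.log 3))))
      apply mul_le_mul_of_nonneg_left ?_ hc.le
      have h1 := Real.log_two_lt_d9
      have h2 := Real.log_two_gt_d9
      have h3 := chen_l3_lo
      norm_num
      linarith
    exact le_trans hmono hnum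
  -- the double integral: inner integral evaluation
  have houter : (∫ a1 in (1/10:ℝ)..(1/3:ℝ),
        ∫ a2 in (1/3:ℝ)..((1 - a1)/2), 1/(a1 * a2 * (1 - a1 - a2)))
      = ∫ a in (1/10:ℝ)..(1/3:ℝ), (Real.log (2/3 - a) + Real.log 3)/(a*(1-a)) := by
    apply intervalIntegral.integral_congr
    intro a ha
    rw [Set.uIcc_of_le (by norm_num)] at ha
    have ha0 : (0:ℝ) < a := by linarith [ha.1]
    have ha1 : a < 1 := by linarith [ha.2]
    have ha3 : a ≤ 1/3 := ha.2
    have hle : (1/3:ℝ) ≤ (1-a)/2 := by linarith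
    simp only []
    have hftc : (∫ a2 in (1/3:ℝ)..((1 - a)/2), 1/(a * a2 * (1 - a - a2)))
        = (Real.log ((1-a)/2) - Real.log (1-a-(1-a)/2))/(a*(1-a))
          - (Real.log (1/3:ℝ) - Real.log (1-a-1/3))/(a*(1-a)) := by
      apply intervalIntegral.integral_eq_sub_of_hasDerivAt
        (f := fun x => (Real.log x - Real.log (1-a-x))/(a*(1-a)))
      · intro x hx
        rw [Set.uIcc_of_le hle] at hx
        have hx0 : (0:ℝ) < x := by linarith [hx.1]
        have hy0 : (0:ℝ) < 1-a-x := by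
          have := hx.2; linarith
        have hd1 : HasDerivAt (fun x : ℝ => Real.log x) x⁻¹ x :=
          Real.hasDerivAt_log (ne_of_gt hx0)
        have hinner : HasDerivAt (fun x : ℝ => 1-a-x) (-1) x := by
          simpa using (hasDerivAt_id x).const_sub (1-a)
        have hd2 : HasDerivAt (fun x : ℝ => Real.log (1-a-x)) ((1-a-x)⁻¹ * (-1)) x :=
          (Real.hasDerivAt_log (ne_of_gt hy0)).comp x hinner
        have hp := (hd1.sub hd2).div_const (a*(1-a))
        refine hp.congr_deriv ?_
        have h1 : a ≠ 0 := ne_of_gt ha0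
        have h2 : (1:ℝ)-a ≠ 0 := by intro h; nlinarith
        have h3 : x ≠ 0 := ne_of_gt hx0
        have h4 : (1:ℝ)-a-x ≠ 0 := ne_of_gt hy0
        field_simp
        ring
      · apply ContinuousOn.intervalIntegrable
        apply ContinuousOn.div continuousOn_const (by fun_prop)
        intro x hx
        rw [Set.uIcc_of_le hle] at hx
        have hx0 : (0:ℝ) < x := by linarith [hx.1]
        have hy0 : (0:ℝ) < 1-a-x := by have := hx.2; linarith
        positivity
    rw [hftc, show (1:ℝ)-a-(1-a)/2 = (1-a)/2 by ring, sub_self,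
      show (1:ℝ)-a-1/3 = 2/3-a by ring, one_div, Real.log_inv]
    ring
  -- bound the outer integrand by a polynomial over a(1-a)
  have hmono2 : (∫ a in (1/10:ℝ)..(1/3:ℝ), (Real.log (2/3 - a) + Real.log 3)/(a*(1-a)))
      ≤ ∫ a in (1/10:ℝ)..(1/3:ℝ),
          ((1-3*a) - (1-3*a)^2/2 + (1-3*a)^3/3 - (1-3*a)^4/4 + (1-3*a)^5/5
            - (1-3*a)^6/6 + (1-3*a)^7/7)/(a*(1-a)) := by
    apply intervalIntegral.integral_mono_on (by norm_num)
    · apply ContinuousOn.intervalIntegrable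
      apply ContinuousOn.div
      · apply ContinuousOn.add ?_ continuousOn_const
        apply ContinuousOn.log (by fun_prop)
        intro a ha
        rw [Set.uIcc_of_le (by norm_num)] at ha
        have : (1/3:ℝ) ≤ 2/3 - a := by linarith [ha.2]
        positivity
      · fun_prop
      · intro a ha
        rw [Set.uIcc_of_le (by norm_num)] at ha
        have ha0 : (0:ℝ) < a := by linarith [ha.1]
        have ha1 : a < 1 := by linarith [ha.2]
        have ha2 : (0:ℝ) < 1 - a := by linarith
        positivity
    · apply ContinuousOn.intervalIntegrable
      apply ContinuousOn.div (by fun_prop) (by fun_prop)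
      intro a ha
      rw [Set.uIcc_of_le (by norm_num)] at ha
      have ha0 : (0:ℝ) < a := by linarith [ha.1]
      have ha1 : a < 1 := by linarith [ha.2]
      have ha2 : (0:ℝ) < 1 - a := by linarith
      positivity
    · intro a ha
      have ha0 : (0:ℝ) < a := by linarith [ha.1]
      have ha1 : a < 1 := by linarith [ha.2]
      have hden : (0:ℝ) < a*(1-a) := by nlinarith
      rw [div_le_div_iff_of_pos_right hden]
      have hu : (0:ℝ) ≤ 1 - 3*a := by linarith [ha.2]
      have hl := chen_log_le7 (1-3*a) hu
      have he : Real.log (1 + (1-3*a)) = Real.log (2/3 - a) + Real.log 3 := by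
        rw [show (1:ℝ) + (1-3*a) = (2/3 - a)*3 by ring,
          Real.log_mul (by intro h; nlinarith [ha.2]) (by norm_num)]
      rw [he] at hl
      exact hl
  -- evaluate the polynomial integral
  have hftc2 : (∫ a in (1/10:ℝ)..(1/3:ℝ),
        ((1-3*a) - (1-3*a)^2/2 + (1-3*a)^3/3 - (1-3*a)^4/4 + (1-3*a)^5/5
          - (1-3*a)^6/6 + (1-3*a)^7/7)/(a*(1-a)))
      = ((6129/140)*(1/3:ℝ) + (8019/280)*(1/3:ℝ)^2 - (1107/140)*(1/3:ℝ)^3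
          + (16767/280)*(1/3:ℝ)^4 - (4131/70)*(1/3:ℝ)^5 + (729/14)*(1/3:ℝ)^6
          + (319/420)*Real.log (1/3:ℝ) + (4832/105)*Real.log (1-(1/3:ℝ)))
        - ((6129/140)*(1/10:ℝ) + (8019/280)*(1/10:ℝ)^2 - (1107/140)*(1/10:ℝ)^3
          + (16767/280)*(1/10:ℝ)^4 - (4131/70)*(1/10:ℝ)^5 + (729/14)*(1/10:ℝ)^6
          + (319/420)*Real.log (1/10:ℝ) + (4832/105)*Real.log (1-(1/10:ℝ))) := by
    apply intervalIntegral.integral_eq_sub_of_hasDerivAt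
      (f := fun a => (6129/140)*a + (8019/280)*a^2 - (1107/140)*a^3
        + (16767/280)*a^4 - (4131/70)*a^5 + (729/14)*a^6
        + (319/420)*Real.log a + (4832/105)*Real.log (1-a))
    · intro a ha
      rw [Set.uIcc_of_le (by norm_num)] at ha
      have ha0 : (0:ℝ) < a := by linarith [ha.1]
      have ha1 : a < 1 := by linarith [ha.2]
      have hid : HasDerivAt (fun a : ℝ => a) 1 a := hasDerivAt_id a
      have hlog1 : HasDerivAt (fun a : ℝ => Real.log a) a⁻¹ a :=
        Real.hasDerivAt_log (ne_of_gt ha0)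
      have hinner : HasDerivAt (fun a : ℝ => 1-a) (-1) a := by
        simpa using (hasDerivAt_id a).const_sub (1:ℝ)
      have hlog2 : HasDerivAt (fun a : ℝ => Real.log (1-a)) ((1-a)⁻¹ * (-1)) a :=
        (Real.hasDerivAt_log (by intro h; nlinarith)).comp a hinner
      have hp := ((((((((hid.const_mul ((6129:ℝ)/140)).add
        ((hid.pow 2).const_mul ((8019:ℝ)/280))).sub
        ((hid.pow 3).const_mul ((1107:ℝ)/140))).add
        ((hid.pow 4).const_mul ((16767:ℝ)/280))).sub
        ((hid.pow 5).const_mul ((4131:ℝ)/70))).add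
        ((hid.pow 6).const_mul ((729:ℝ)/14))).add
        (hlog1.const_mul ((319:ℝ)/420))).add
        (hlog2.const_mul ((4832:ℝ)/105)))
      refine hp.congr_deriv ?_
      have h1 : a ≠ 0 := ne_of_gt ha0
      have h2 : (1:ℝ)-a ≠ 0 := by intro h; nlinarith
      have h3 : a*(1-a) ≠ 0 := mul_ne_zero h1 h2
      field_simp
      ring
    · apply ContinuousOn.intervalIntegrable
      apply ContinuousOn.div (by fun_prop) (by fun_prop)
      intro a ha
      rw [Set.uIcc_of_le (by norm_num)] at ha
      have ha0 : (0:ℝ) < a := by linarith [ha.1]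
      have ha1 : a < 1 := by linarith [ha.2]
      have ha2 : (0:ℝ) < 1 - a := by linarith
      positivity
  -- numeric bound for the double integral
  have hI2 : (∫ a1 in (1/10:ℝ)..(1/3:ℝ),
        ∫ a2 in (1/3:ℝ)..((1 - a1)/2), 1/(a1 * a2 * (1 - a1 - a2)))
      ≤ 4941/10000 := by
    rw [houter]
    refine le_trans (le_trans hmono2 (le_of_eq hftc2)) ?_
    have e13 : Real.log ((1:ℝ)/3) = -Real.log 3 := by rw [one_div, Real.log_inv]
    have e23 : Real.log ((1:ℝ)-1/3) = Real.log 2 - Real.log 3 := by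
      rw [show (1:ℝ)-1/3 = 2/3 by norm_num, Real.log_div (by norm_num) (by norm_num)]
    have e110 : Real.log ((1:ℝ)/10) = -(Real.log 2 + Real.log 5) := by
      rw [one_div, Real.log_inv, show (10:ℝ) = 2*5 by norm_num,
        Real.log_mul (by norm_num) (by norm_num)]
    have e910 : Real.log ((1:ℝ)-1/10) = 2*Real.log 3 - (Real.log 2 + Real.log 5) := by
      rw [show (1:ℝ)-1/10 = 9/10 by norm_num, Real.log_div (by norm_num) (by norm_num),
        show (9:ℝ) = 3^2 by norm_num, Real.log_pow, show (10:ℝ) = 2*5 by norm_num,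
        Real.log_mul (by norm_num) (by norm_num)]
      push_cast; ring
    rw [e13, e23, e110, e910]
    have h1 := Real.log_two_lt_d9
    have h2 := Real.log_two_gt_d9
    have h3 := chen_l3_lo
    have h4 := chen_l3_hi
    have h5 := chen_l5_lo
    have h6 := chen_l5_hi
    norm_num
    linarith
  -- final assembly
  have hF3 : F 3 = c/3 := hF13' 3 (by norm_num) (by norm_num)
  have hint1 : IntervalIntegrable (fun t : ℝ => F (5 - 10*t) / t)
      MeasureTheory.volume (1/10) (1/5) := by
    apply ContinuousOn.intervalIntegrable
    apply ContinuousOn.div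
    · have h1 : ContinuousOn (F ∘ (fun t : ℝ => 5 - 10*t)) (Set.uIcc (1/10:ℝ) (1/5:ℝ)) := by
        apply hFc.comp (by fun_prop)
        intro x hx
        rw [Set.uIcc_of_le (by norm_num)] at hx
        simp only [Set.mem_Ici]
        linarith [hx.2]
      simpa [Function.comp_def] using h1
    · fun_prop
    · intro t ht
      rw [Set.uIcc_of_le (by norm_num)] at ht
      have : (0:ℝ) < t := by linarith [ht.1]
      exact ne_of_gt this
  have hint2 : IntervalIntegrable (fun t : ℝ => F (5 - 10*t) / t)
      MeasureTheory.volume (1/5) (1/3) := by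
    apply ContinuousOn.intervalIntegrable
    apply ContinuousOn.div
    · have h1 : ContinuousOn (F ∘ (fun t : ℝ => 5 - 10*t)) (Set.uIcc (1/5:ℝ) (1/3:ℝ)) := by
        apply hFc.comp (by fun_prop)
        intro x hx
        rw [Set.uIcc_of_le (by norm_num)] at hx
        simp only [Set.mem_Ici]
        linarith [hx.2]
      simpa [Function.comp_def] using h1
    · fun_prop
    · intro t ht
      rw [Set.uIcc_of_le (by norm_num)] at ht
      have : (0:ℝ) < t := by linarith [ht.1]
      exact ne_of_gt this
  have hsplitI1 : (∫ t in (1/10:ℝ)..(1/3:ℝ), F (5 - 10*t) / t)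
      = (∫ t in (1/10:ℝ)..(1/5:ℝ), F (5 - 10*t) / t)
        + ∫ t in (1/5:ℝ)..(1/3:ℝ), F (5 - 10*t) / t :=
    (intervalIntegral.integral_add_adjacent_intervals hint1 hint2).symm
  rw [hsplitI1, hF3, hP2]
  have hcl3lo : c * (1.0986095:ℝ) ≤ c * Real.log 3 :=
    mul_le_mul_of_nonneg_left chen_l3_lo.le hc.le
  have hcI2 : (3/10) * (c/3) * (∫ a1 in (1/10:ℝ)..(1/3:ℝ),
        ∫ a2 in (1/3:ℝ)..((1 - a1)/2), 1/(a1 * a2 * (1 - a1 - a2)))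
      ≤ (3/10) * (c/3) * (4941/10000) := by
    apply mul_le_mul_of_nonneg_left hI2 (by positivity)
  nlinarith [h5f, hJ, hP1, hcl3lo, hcI2, hc]
end
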